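/- arXiv:1809.10886 — 11 statements merged into one kernel-verified Lean document; each statement's English description precedes it below -/
import Mathlib

section
/- Let C = (c_{xy}) ∈ [-1,1]^{2×n} and set θ_{xy} = arccos(c_{xy}) ∈ [0,π] for x ∈ {1,2}, y ∈ [n]. Then C ∈ Cor(2,n) if and only if for all 1 ≤ i < j ≤ n the following inequalities hold: 0 ≤ θ_{1j}+θ_{2i}+θ_{2j}−θ_{1i} ≤ 2π, 0 ≤ θ_{1i}+θ_{2i}+θ_{2j}−θ_{1j} ≤ 2π, 0 ≤ θ_{1i}+θ_{1j}+θ_{2j}−θ_{2i} ≤ 2π, and 0 ≤ θ_{1i}+θ_{1j}+θ_{2i}−θ_{2j} ≤ 2π. -/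
open Matrix Real
open scoped RealInnerProductSpace

/-- The set of quantum correlation matrices (Tsirelson): `n × m` real matrices whose entries
are inner products of unit vectors in `ℝ^{n+m}`. -/
def Cor (n m : ℕ) : Set (Matrix (Fin n) (Fin m) ℝ) :=
  {C | ∃ u : Fin n → EuclideanSpace ℝ (Fin (n + m)),
       ∃ v : Fin m → EuclideanSpace ℝ (Fin (n + m)),
       (∀ x, ‖u x‖ = 1) ∧ (∀ y, ‖v y‖ = 1) ∧
       ∀ x y, C x y = ⟪u x, v y⟫}

/-- The elliptope: PSD matrices with unit diagonal. -/
def Elliptope (k : ℕ) : Set (Matrix (Fin k) (Fin k) ℝ) :=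
  {X | X.PosSemidef ∧ ∀ i, X i i = 1}

/-- `X` is a PSD completion of `C`. -/
def IsPSDCompletion (n m : ℕ) (X : Matrix (Fin (n + m)) (Fin (n + m)) ℝ)
    (C : Matrix (Fin n) (Fin m) ℝ) : Prop :=
  X ∈ Elliptope (n + m) ∧ ∀ x y, X (Fin.castAdd m x) (Fin.natAdd n y) = C x y

/-- `C` is an extreme point of the convex set `S`. -/
def IsExtremePt {E : Type*} [AddCommMonoid E] [Module ℝ E] (S : Set E) (C : E) : Prop :=
  C ∈ S ∧ ∀ C₁ ∈ S, ∀ C₂ ∈ S, ∀ l : ℝ, 0 < l → l < 1 →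
    C = l • C₁ + (1 - l) • C₂ → C₁ = C ∧ C₂ = C

lemma my_arccos_le_arccos {x y : ℝ} (h : x ≤ y) : arccos y ≤ arccos x := by
  unfold Real.arccos
  have := Real.monotone_arcsin h
  linarith

lemma my_norm_eq_one {E : Type*} [NormedAddCommGroup E] [InnerProductSpace ℝ E]
    (x : E) (h : ⟪x, x⟫ = 1) : ‖x‖ = 1 := by
  have h2 := real_inner_self_eq_norm_mul_norm x
  nlinarith [norm_nonneg x]

lemma arccos_tri {E : Type*} [NormedAddCommGroup E] [InnerProductSpace ℝ E]
    (a b c : E) (ha : ‖a‖ = 1) (hb : ‖b‖ = 1) (hc : ‖c‖ = 1) :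
    arccos ⟪a, c⟫ ≤ arccos ⟪a, b⟫ + arccos ⟪b, c⟫ := by
  set p := ⟪a, b⟫ with hp
  set q := ⟪b, c⟫ with hq
  set r := ⟪a, c⟫ with hr
  have hpb : |p| ≤ 1 := by
    have := abs_real_inner_le_norm a b; rw [ha, hb] at this; simpa using this
  have hqb : |q| ≤ 1 := by
    have := abs_real_inner_le_norm b c; rw [hb, hc] at this; simpa using this
  have hrb : |r| ≤ 1 := by
    have := abs_real_inner_le_norm a c; rw [ha, hc] at this; simpa using this
  rw [abs_le] at hpb hqb hrb
  have hbb : ⟪b, b⟫ = 1 := by rw [real_inner_self_eq_norm_mul_norm, hb]; ring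
  have haa : ⟪a, a⟫ = 1 := by rw [real_inner_self_eq_norm_mul_norm, ha]; ring
  have hcc : ⟪c, c⟫ = 1 := by rw [real_inner_self_eq_norm_mul_norm, hc]; ring
  have key : (r - p * q) ^ 2 ≤ (1 - p ^ 2) * (1 - q ^ 2) := by
    have h1 : ⟪a - p • b, c - q • b⟫ = r - p * q := by
      simp only [inner_sub_left, inner_sub_right, real_inner_smul_left, real_inner_smul_right,
        hbb]
      rw [← hq, ← hr]
      ring
    have h2 : ⟪a - p • b, a - p • b⟫ = 1 - p ^ 2 := by
      simp only [inner_sub_left, inner_sub_right, real_inner_smul_left, real_inner_smul_right,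
        hbb, haa]
      rw [show ⟪b,a⟫ = p by rw [hp, real_inner_comm]]; ring
    have h3 : ⟪c - q • b, c - q • b⟫ = 1 - q ^ 2 := by
      simp only [inner_sub_left, inner_sub_right, real_inner_smul_left, real_inner_smul_right,
        hbb, hcc]
      rw [show ⟪c,b⟫ = q by rw [hq, real_inner_comm]]; ring
    have h7 := abs_real_inner_le_norm (a - p • b) (c - q • b)
    have h8 : |⟪a - p • b, c - q • b⟫| ^ 2 = (r - p * q) ^ 2 := by rw [h1, sq_abs]
    calc (r - p * q) ^ 2 = |⟪a - p • b, c - q • b⟫| ^ 2 := h8.symm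
      _ ≤ (‖a - p • b‖ * ‖c - q • b‖) ^ 2 := by
          apply pow_le_pow_left₀ (abs_nonneg _) h7
      _ = (1 - p ^ 2) * (1 - q ^ 2) := by
          rw [mul_pow]
          rw [← real_inner_self_eq_norm_sq, ← real_inner_self_eq_norm_sq, h2, h3]
  by_cases hS : arccos p + arccos q ≤ π
  · have hcosS : Real.cos (arccos p + arccos q)
        = p * q - Real.sqrt (1 - p ^ 2) * Real.sqrt (1 - q ^ 2) := by
      rw [Real.cos_add, Real.cos_arccos hpb.1 hpb.2, Real.cos_arccos hqb.1 hqb.2,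
        Real.sin_arccos, Real.sin_arccos]
    have hsp : Real.sqrt (1 - p ^ 2) ≥ 0 := Real.sqrt_nonneg _
    have hsq : Real.sqrt (1 - q ^ 2) ≥ 0 := Real.sqrt_nonneg _
    have hsp2 : Real.sqrt (1 - p ^ 2) ^ 2 = 1 - p ^ 2 :=
      Real.sq_sqrt (by nlinarith [hpb.1, hpb.2])
    have hsq2 : Real.sqrt (1 - q ^ 2) ^ 2 = 1 - q ^ 2 :=
      Real.sq_sqrt (by nlinarith [hqb.1, hqb.2])
    have hge : p * q - Real.sqrt (1 - p ^ 2) * Real.sqrt (1 - q ^ 2) ≤ r := by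
      nlinarith [sq_nonneg (r - p * q + Real.sqrt (1 - p ^ 2) * Real.sqrt (1 - q ^ 2)),
        mul_nonneg hsp hsq]
    calc arccos r ≤ arccos (Real.cos (arccos p + arccos q)) := by
          rw [hcosS]; exact my_arccos_le_arccos hge
      _ = arccos p + arccos q := Real.arccos_cos
          (add_nonneg (Real.arccos_nonneg p) (Real.arccos_nonneg q)) hS
  · push_neg at hS
    linarith [Real.arccos_le_pi r]

lemma arccos_sum_le {E : Type*} [NormedAddCommGroup E] [InnerProductSpace ℝ E]
    (a b c : E) (ha : ‖a‖ = 1) (hb : ‖b‖ = 1) (hc : ‖c‖ = 1) :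
    arccos ⟪a, b⟫ + arccos ⟪b, c⟫ + arccos ⟪a, c⟫ ≤ 2 * π := by
  have h := arccos_tri a (-b) c ha (by rw [norm_neg, hb]) hc
  rw [inner_neg_right, inner_neg_left, Real.arccos_neg, Real.arccos_neg] at h
  linarith

lemma cos_le_cos_aux {x d : ℝ} (hx0 : 0 ≤ x) (hd : |d| ≤ π)
    (h1 : |d| ≤ x) (h2 : |d| ≤ 2 * π - x) : Real.cos x ≤ Real.cos d := by
  rw [← Real.cos_abs d]
  by_cases h : x ≤ π
  · exact Real.cos_le_cos_of_nonneg_of_le_pi (abs_nonneg d) h h1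
  · push_neg at h
    have hcx : Real.cos x = Real.cos (2 * π - x) := by
      rw [Real.cos_sub]; simp
    rw [hcx]
    exact Real.cos_le_cos_of_nonneg_of_le_pi (abs_nonneg d) (by linarith) h2

set_option maxHeartbeats 1000000 in
theorem stmt2 (n : ℕ) (C : Matrix (Fin 2) (Fin n) ℝ)
    (hC : ∀ x y, C x y ∈ Set.Icc (-1 : ℝ) 1)
    (θ : Fin 2 → Fin n → ℝ) (hθ : ∀ x y, θ x y = Real.arccos (C x y)) :
    C ∈ Cor 2 n ↔
      ∀ i j : Fin n, i < j →
        (0 ≤ θ 0 j + θ 1 i + θ 1 j - θ 0 i ∧ θ 0 j + θ 1 i + θ 1 j - θ 0 i ≤ 2 * π) ∧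
        (0 ≤ θ 0 i + θ 1 i + θ 1 j - θ 0 j ∧ θ 0 i + θ 1 i + θ 1 j - θ 0 j ≤ 2 * π) ∧
        (0 ≤ θ 0 i + θ 0 j + θ 1 j - θ 1 i ∧ θ 0 i + θ 0 j + θ 1 j - θ 1 i ≤ 2 * π) ∧
        (0 ≤ θ 0 i + θ 0 j + θ 1 i - θ 1 j ∧ θ 0 i + θ 0 j + θ 1 i - θ 1 j ≤ 2 * π) := by
  constructor
  · rintro ⟨u, v, hu, hv, huv⟩ i j hij
    have hθ' : ∀ x y, θ x y = arccos ⟪u x, v y⟫ := fun x y => by rw [hθ, huv]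
    set ψ := arccos ⟪u 0, u 1⟫ with hψ
    have h1 : ∀ y, θ 0 y ≤ ψ + θ 1 y := fun y => by
      rw [hθ' 0 y, hθ' 1 y]; exact arccos_tri (u 0) (u 1) (v y) (hu 0) (hu 1) (hv y)
    have h2 : ∀ y, θ 1 y ≤ ψ + θ 0 y := fun y => by
      have h := arccos_tri (u 1) (u 0) (v y) (hu 1) (hu 0) (hv y)
      rw [real_inner_comm (u 0) (u 1)] at h
      rw [hθ' 1 y, hθ' 0 y]
      exact h
    have h3 : ∀ y, ψ ≤ θ 0 y + θ 1 y := fun y => by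
      have h := arccos_tri (u 0) (v y) (u 1) (hu 0) (hv y) (hu 1)
      rw [real_inner_comm (u 1) (v y)] at h
      rw [hθ' 0 y, hθ' 1 y]; exact h
    have h4 : ∀ y, θ 0 y + θ 1 y + ψ ≤ 2 * π := fun y => by
      have h := arccos_sum_le (u 0) (v y) (u 1) (hu 0) (hv y) (hu 1)
      rw [real_inner_comm (u 1) (v y)] at h
      rw [hθ' 0 y, hθ' 1 y]; linarith
    refine ⟨⟨?_, ?_⟩, ⟨?_, ?_⟩, ⟨?_, ?_⟩, ⟨?_, ?_⟩⟩ <;>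
      linarith [h1 i, h1 j, h2 i, h2 j, h3 i, h3 j, h4 i, h4 j]
  · intro h
    have hC0 : ∀ x y, -1 ≤ C x y := fun x y => (hC x y).1
    have hC1 : ∀ x y, C x y ≤ 1 := fun x y => (hC x y).2
    have hθ0 : ∀ x y, 0 ≤ θ x y := fun x y => by rw [hθ]; exact Real.arccos_nonneg _
    have hθπ : ∀ x y, θ x y ≤ π := fun x y => by rw [hθ]; exact Real.arccos_le_pi _
    set s : Fin n → ℝ :=
      fun y => Real.sqrt (1 - C 0 y ^ 2) * Real.sqrt (1 - C 1 y ^ 2) with hs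
    have hs0 : ∀ y, 0 ≤ s y := fun y =>
      mul_nonneg (Real.sqrt_nonneg _) (Real.sqrt_nonneg _)
    have hs2 : ∀ y, s y ^ 2 = (1 - C 0 y ^ 2) * (1 - C 1 y ^ 2) := by
      intro y
      rw [hs, mul_pow, Real.sq_sqrt (by nlinarith [hC0 0 y, hC1 0 y]),
        Real.sq_sqrt (by nlinarith [hC0 1 y, hC1 1 y])]
    have hcosadd : ∀ y, Real.cos (θ 0 y + θ 1 y) = C 0 y * C 1 y - s y := by
      intro y
      rw [hθ 0 y, hθ 1 y, Real.cos_add, Real.cos_arccos (hC0 0 y) (hC1 0 y),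
        Real.cos_arccos (hC0 1 y) (hC1 1 y), Real.sin_arccos, Real.sin_arccos, hs]
    have hcossub : ∀ y, Real.cos (θ 0 y - θ 1 y) = C 0 y * C 1 y + s y := by
      intro y
      rw [hθ 0 y, hθ 1 y, Real.cos_sub, Real.cos_arccos (hC0 0 y) (hC1 0 y),
        Real.cos_arccos (hC0 1 y) (hC1 1 y), Real.sin_arccos, Real.sin_arccos, hs]
    -- the key pairwise inequality
    have hKlt : ∀ i j : Fin n, i < j →
        (C 0 i * C 1 i - s i ≤ C 0 j * C 1 j + s j) ∧
        (C 0 j * C 1 j - s j ≤ C 0 i * C 1 i + s i) := by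
      intro i j hij
      obtain ⟨⟨A1, A2⟩, ⟨B1, B2⟩, ⟨C1', C2⟩, ⟨D1, D2⟩⟩ := h i j hij
      constructor
      · rw [← hcosadd i, ← hcossub j]
        apply cos_le_cos_aux (add_nonneg (hθ0 0 i) (hθ0 1 i))
        · rw [abs_le]
          constructor <;> linarith [hθπ 1 j, hθ0 0 j, hθπ 0 j, hθ0 1 j]
        · rw [abs_le]; constructor <;> linarith
        · rw [abs_le]; constructor <;> linarith
      · rw [← hcosadd j, ← hcossub i]
        apply cos_le_cos_aux (add_nonneg (hθ0 0 j) (hθ0 1 j))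
        · rw [abs_le]
          constructor <;> linarith [hθπ 1 i, hθ0 0 i, hθπ 0 i, hθ0 1 i]
        · rw [abs_le]; constructor <;> linarith
        · rw [abs_le]; constructor <;> linarith
    have hK : ∀ i j : Fin n, C 0 i * C 1 i - s i ≤ C 0 j * C 1 j + s j := by
      intro i j
      rcases lt_trichotomy i j with hij | hij | hij
      · exact (hKlt i j hij).1
      · subst hij; linarith [hs0 i]
      · exact (hKlt j i hij).2
    rcases Nat.eq_zero_or_pos n with hn | hn
    · subst hn
      refine ⟨fun _ => EuclideanSpace.single (Fin.castAdd 0 (0 : Fin 2)) (1 : ℝ),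
        fun y => y.elim0, fun x => by simp, fun y => y.elim0, fun x y => y.elim0⟩
    -- pick t
    obtain ⟨i₀, -, hmax⟩ := Finset.exists_max_image Finset.univ
      (fun y => C 0 y * C 1 y - s y) ⟨⟨0, hn⟩, Finset.mem_univ _⟩
    set t : ℝ := C 0 i₀ * C 1 i₀ - s i₀ with ht
    have htle : ∀ y, t ≤ C 0 y * C 1 y + s y := fun y => hK i₀ y
    have htge : ∀ y, C 0 y * C 1 y - s y ≤ t := fun y => hmax y (Finset.mem_univ y)
    have ht1 : -1 ≤ t ∧ t ≤ 1 := by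
      constructor
      · rw [ht]
        have hsq : (s i₀) ^ 2 ≤ (C 0 i₀ * C 1 i₀ + 1) ^ 2 := by
          nlinarith [hs2 i₀, sq_nonneg (C 0 i₀ + C 1 i₀)]
        have hp : 0 ≤ C 0 i₀ * C 1 i₀ + 1 := by
          nlinarith [hC0 0 i₀, hC1 0 i₀, hC0 1 i₀, hC1 1 i₀]
        nlinarith [hs0 i₀]
      · rw [ht]
        nlinarith [hs0 i₀, hC0 0 i₀, hC1 0 i₀, hC0 1 i₀, hC1 1 i₀,
          sq_nonneg (C 0 i₀ - C 1 i₀), sq_nonneg (C 0 i₀ + C 1 i₀)]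
    have hkey : ∀ y, (C 1 y - C 0 y * t) ^ 2 ≤ (1 - t ^ 2) * (1 - C 0 y ^ 2) := by
      intro y
      have h1 := htle y
      have h2 := htge y
      nlinarith [hs2 y, hs0 y,
        mul_nonneg (by linarith : (0:ℝ) ≤ s y - (t - C 0 y * C 1 y))
          (by linarith : (0:ℝ) ≤ s y + (t - C 0 y * C 1 y))]
    -- construction
    set st : ℝ := Real.sqrt (1 - t ^ 2) with hstdef
    have hst0 : 0 ≤ st := Real.sqrt_nonneg _
    have hst2 : st ^ 2 = 1 - t ^ 2 := Real.sq_sqrt (by nlinarith [ht1.1, ht1.2])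
    set i0 : Fin (2 + n) := Fin.castAdd n (0 : Fin 2) with hi0
    set i1 : Fin (2 + n) := Fin.castAdd n (1 : Fin 2) with hi1
    have h01 : i0 ≠ i1 := by simp [hi0, hi1, Fin.ext_iff]
    have h0y : ∀ y : Fin n, i0 ≠ Fin.natAdd 2 y := by
      intro y; simp [hi0, Fin.ext_iff]; omega
    have h1y : ∀ y : Fin n, i1 ≠ Fin.natAdd 2 y := by
      intro y; simp [hi1, Fin.ext_iff]; omega
    set e0 : EuclideanSpace ℝ (Fin (2 + n)) := EuclideanSpace.single i0 1 with he0
    set e1 : EuclideanSpace ℝ (Fin (2 + n)) := EuclideanSpace.single i1 1 with he1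
    set e2 : Fin n → EuclideanSpace ℝ (Fin (2 + n)) :=
      fun y => EuclideanSpace.single (Fin.natAdd 2 y) 1 with he2
    have inner_e : ∀ p q : Fin (2 + n),
        ⟪(EuclideanSpace.single p (1:ℝ)), (EuclideanSpace.single q (1:ℝ))⟫
          = if p = q then 1 else 0 := by
      intro p q
      rw [EuclideanSpace.inner_single_left]
      simp [EuclideanSpace.single_apply, eq_comm]
    have i00 : ⟪e0, e0⟫ = 1 := by rw [he0, inner_e]; simp
    have i11 : ⟪e1, e1⟫ = 1 := by rw [he1, inner_e]; simp
    have i01 : ⟪e0, e1⟫ = 0 := by rw [he0, he1, inner_e]; simp [h01]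
    have i10 : ⟪e1, e0⟫ = 0 := by rw [he0, he1, inner_e]; simp [Ne.symm h01]
    have i0y : ∀ y, ⟪e0, e2 y⟫ = 0 := by
      intro y; rw [he0, he2, inner_e]; simp [h0y y]
    have iy0 : ∀ y, ⟪e2 y, e0⟫ = 0 := by
      intro y; rw [he0, he2, inner_e]; simp [Ne.symm (h0y y)]
    have i1y : ∀ y, ⟪e1, e2 y⟫ = 0 := by
      intro y; rw [he1, he2, inner_e]; simp [h1y y]
    have iy1 : ∀ y, ⟪e2 y, e1⟫ = 0 := by
      intro y; rw [he1, he2, inner_e]; simp [Ne.symm (h1y y)]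
    have iyy : ∀ y, ⟪e2 y, e2 y⟫ = 1 := by
      intro y; rw [he2, inner_e]; simp
    set β : Fin n → ℝ := fun y => (C 1 y - C 0 y * t) / st with hβdef
    have hab2 : ∀ y, C 0 y ^ 2 + β y ^ 2 ≤ 1 ∧ t * C 0 y + st * β y = C 1 y := by
      intro y
      by_cases hstz : st = 0
      · have ht2 : t ^ 2 = 1 := by rw [hstz] at hst2; nlinarith
        have hba : C 1 y - C 0 y * t = 0 := by
          have hk := hkey y
          nlinarith [sq_nonneg (C 1 y - C 0 y * t)]
        have hβ0 : β y = 0 := by rw [hβdef]; simp [hstz]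
        constructor
        · rw [hβ0]; nlinarith [hC0 0 y, hC1 0 y]
        · rw [hβ0, hstz]; linarith
      · have hstpos : 0 < st := lt_of_le_of_ne hst0 (Ne.symm hstz)
        have hβm : β y * st = C 1 y - C 0 y * t := div_mul_cancel₀ _ hstz
        constructor
        · have hk := hkey y
          have hsq : β y ^ 2 * st ^ 2 = (C 1 y - C 0 y * t) ^ 2 := by
            rw [← hβm]; ring
          nlinarith [hsq, hst2, mul_pos hstpos hstpos]
        · have : st * β y = C 1 y - C 0 y * t := by rw [mul_comm]; exact hβm
          linarith
    set γ : Fin n → ℝ := fun y => Real.sqrt (1 - C 0 y ^ 2 - β y ^ 2) with hγdef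
    have hγ2 : ∀ y, γ y ^ 2 = 1 - C 0 y ^ 2 - β y ^ 2 := fun y =>
      Real.sq_sqrt (by linarith [(hab2 y).1])
    refine ⟨fun x => if x = 0 then e0 else t • e0 + st • e1,
      fun y => C 0 y • e0 + β y • e1 + γ y • e2 y, ?_, ?_, ?_⟩
    · intro x
      beta_reduce
      by_cases hx : x = 0
      · rw [if_pos hx, he0]; simp
      · rw [if_neg hx]
        apply my_norm_eq_one
        simp only [inner_add_left, inner_add_right, real_inner_smul_left,
          real_inner_smul_right, i00, i01, i10, i11]
        nlinarith [hst2]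
    · intro y
      beta_reduce
      apply my_norm_eq_one
      simp only [inner_add_left, inner_add_right, real_inner_smul_left,
        real_inner_smul_right, i00, i01, i10, i11, i0y y, iy0 y, i1y y, iy1 y, iyy y]
      nlinarith [hγ2 y]
    · intro x y
      beta_reduce
      by_cases hx : x = 0
      · subst hx
        rw [if_pos rfl]
        simp only [inner_add_right, real_inner_smul_right, i00, i01, i0y y]
        ring
      · have hx1 : x = 1 := by
          have h2 := x.isLt
          have h0 : x.val ≠ 0 := fun hh => hx (Fin.ext (by simpa using hh))
          exact Fin.ext (by omega)
        subst hx1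
        rw [if_neg hx]
        simp only [inner_add_left, inner_add_right, real_inner_smul_left,
          real_inner_smul_right, i00, i01, i10, i11, i0y y, i1y y, iy0 y, iy1 y]
        have hb := (hab2 y).2
        ring_nf
        ring_nf at hb
        linarith
end

section
/- Let C ∈ Cor(n,m) with rank(C) = 1. Then C is an extreme point of Cor(n,m) if and only if C = x yᵀ for some sign vectors x ∈ {±1}^n and y ∈ {±1}^m (i.e., C is local deterministic). -/
open Matrix Real
open scoped RealInnerProductSpace

private lemma abs_le_one_of_mem_cor {n m : ℕ} {C : Matrix (Fin n) (Fin m) ℝ}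
    (hC : C ∈ Cor n m) (x : Fin n) (y : Fin m) : |C x y| ≤ 1 := by
  obtain ⟨u, v, hu, hv, h⟩ := hC
  rw [h]
  calc |⟪u x, v y⟫| ≤ ‖u x‖ * ‖v y‖ := abs_real_inner_le_norm _ _
    _ = 1 := by rw [hu, hv, mul_one]

private lemma norm_comb {N : ℕ} (i j : Fin N) (hij : i ≠ j) (c : ℝ) (hc : |c| ≤ 1) :
    ‖(c • EuclideanSpace.single i (1:ℝ) + Real.sqrt (1 - c^2) • EuclideanSpace.single j 1 :
      EuclideanSpace ℝ (Fin N))‖ = 1 := by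
  have hc2 : (0:ℝ) ≤ 1 - c^2 := by
    have := abs_le.mp hc
    nlinarith
  set w : EuclideanSpace ℝ (Fin N) :=
    c • EuclideanSpace.single i 1 + Real.sqrt (1 - c^2) • EuclideanSpace.single j 1 with hw
  have h1 : ⟪w, w⟫ = 1 := by
    simp only [hw, inner_add_left, inner_add_right, real_inner_smul_left, real_inner_smul_right,
      EuclideanSpace.inner_single_left, conj_trivial, EuclideanSpace.single_apply]
    rw [if_neg hij, if_neg (Ne.symm hij)]
    simp only [mul_zero, zero_mul, add_zero, zero_add, mul_one, one_mul, if_true]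
    rw [Real.mul_self_sqrt hc2]
    ring
  have h2 : ‖w‖ * ‖w‖ = 1 := by rw [← real_inner_self_eq_norm_mul_norm, h1]
  have h3 : (0:ℝ) ≤ ‖w‖ := norm_nonneg _
  nlinarith

private lemma inner_comb {N : ℕ} (i j k : Fin N) (hij : i ≠ j) (hik : i ≠ k) (hjk : j ≠ k)
    (c s d t : ℝ) :
    ⟪(c • EuclideanSpace.single i (1:ℝ) + s • EuclideanSpace.single j 1 :
       EuclideanSpace ℝ (Fin N)),
      (d • EuclideanSpace.single i (1:ℝ) + t • EuclideanSpace.single k 1 :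
       EuclideanSpace ℝ (Fin N))⟫ = c * d := by
  simp only [inner_add_left, inner_add_right, real_inner_smul_left, real_inner_smul_right,
    EuclideanSpace.inner_single_left, conj_trivial, EuclideanSpace.single_apply]
  simp only [if_pos, Ne.symm hij, Ne.symm hik, hik, hjk, if_false, if_true]
  ring

private lemma vecMulVec_mem_cor {n m : ℕ} (hn : 0 < n) (hm : 0 < m)
    (a : Fin n → ℝ) (b : Fin m → ℝ) (ha : ∀ x, |a x| ≤ 1) (hb : ∀ y, |b y| ≤ 1) :
    Matrix.vecMulVec a b ∈ Cor n m := by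
  by_cases h3 : 3 ≤ n + m
  · set i0 : Fin (n+m) := ⟨0, by omega⟩
    set i1 : Fin (n+m) := ⟨1, by omega⟩
    set i2 : Fin (n+m) := ⟨2, by omega⟩
    have h01 : i0 ≠ i1 := by simp [i0, i1, Fin.ext_iff]
    have h02 : i0 ≠ i2 := by simp [i0, i2, Fin.ext_iff]
    have h12 : i1 ≠ i2 := by simp [i1, i2, Fin.ext_iff]
    refine ⟨fun x => a x • EuclideanSpace.single i0 1 +
        Real.sqrt (1 - (a x)^2) • EuclideanSpace.single i1 1,
      fun y => b y • EuclideanSpace.single i0 1 +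
        Real.sqrt (1 - (b y)^2) • EuclideanSpace.single i2 1,
      fun x => norm_comb i0 i1 h01 _ (ha x),
      fun y => norm_comb i0 i2 h02 _ (hb y), fun x y => ?_⟩
    rw [inner_comb i0 i1 i2 h01 h02 h12]
    simp [Matrix.vecMulVec_apply]
  · obtain rfl : n = 1 := by omega
    obtain rfl : m = 1 := by omega
    set i0 : Fin (1+1) := ⟨0, by omega⟩
    set i1 : Fin (1+1) := ⟨1, by omega⟩
    have h01 : i0 ≠ i1 := by simp [i0, i1, Fin.ext_iff]
    set c : ℝ := a 0 * b 0 with hcdef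
    have hc : |c| ≤ 1 := by
      rw [hcdef, abs_mul]
      exact mul_le_one₀ (ha 0) (abs_nonneg _) (hb 0)
    refine ⟨fun _ => EuclideanSpace.single i0 1,
      fun _ => c • EuclideanSpace.single i0 1 + Real.sqrt (1 - c^2) • EuclideanSpace.single i1 1,
      fun _ => by simp [EuclideanSpace.norm_single],
      fun _ => norm_comb i0 i1 h01 c hc, fun x y => ?_⟩
    have hx : x = 0 := Subsingleton.elim _ _
    have hy : y = 0 := Subsingleton.elim _ _
    subst hx; subst hy
    simp [Matrix.vecMulVec_apply, inner_add_right, real_inner_smul_right,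
      EuclideanSpace.inner_single_left, EuclideanSpace.single_apply, PiLp.add_apply,
      PiLp.smul_apply, smul_eq_mul, h01, hcdef]

private lemma rank_one_factor {n m : ℕ} (C : Matrix (Fin n) (Fin m) ℝ) (hrank : C.rank = 1) :
    ∃ w : Fin n → ℝ, ∃ t : Fin m → ℝ, w ≠ 0 ∧ ∀ i j, C i j = t j * w i := by
  rw [Matrix.rank] at hrank
  obtain ⟨v0, hv0ne, hv0⟩ := finrank_eq_one_iff'.mp hrank
  have hcol : ∀ j : Fin m, C.mulVec (Pi.single j 1) ∈ LinearMap.range C.mulVecLin :=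
    fun j => ⟨Pi.single j 1, Matrix.mulVecLin_apply _ _⟩
  choose t ht using fun j => hv0 ⟨C.mulVec (Pi.single j 1), hcol j⟩
  refine ⟨(v0 : Fin n → ℝ), t, by simpa using hv0ne, fun i j => ?_⟩
  have h1 : t j • (v0 : Fin n → ℝ) = C.mulVec (Pi.single j 1) := by
    have := congrArg Subtype.val (ht j)
    simpa using this
  have h2 := congrFun h1 i
  simp [Matrix.mulVec_single] at h2
  rw [← h2]

private lemma extreme_entry {p c₁ c₂ l : ℝ} (hp : p = 1 ∨ p = -1) (h1 : |c₁| ≤ 1)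
    (h2 : |c₂| ≤ 1) (hl0 : 0 < l) (hl1 : l < 1) (he : p = l * c₁ + (1 - l) * c₂) :
    c₁ = p ∧ c₂ = p := by
  obtain ⟨h1a, h1b⟩ := abs_le.mp h1
  obtain ⟨h2a, h2b⟩ := abs_le.mp h2
  rcases hp with rfl | rfl
  · constructor
    · nlinarith [mul_nonneg (by linarith : (0:ℝ) ≤ 1 - l) (by linarith : (0:ℝ) ≤ 1 - c₂)]
    · nlinarith [mul_nonneg hl0.le (by linarith : (0:ℝ) ≤ 1 - c₁)]
  · constructor
    · nlinarith [mul_nonneg (by linarith : (0:ℝ) ≤ 1 - l) (by linarith : (0:ℝ) ≤ 1 + c₂)]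
    · nlinarith [mul_nonneg hl0.le (by linarith : (0:ℝ) ≤ 1 + c₁)]

theorem stmt4 (n m : ℕ) (C : Matrix (Fin n) (Fin m) ℝ) (hC : C ∈ Cor n m)
    (hrank : C.rank = 1) :
    IsExtremePt (Cor n m) C ↔
      ∃ (x : Fin n → ℝ) (y : Fin m → ℝ),
        (∀ i, x i = 1 ∨ x i = -1) ∧ (∀ j, y j = 1 ∨ y j = -1) ∧
        C = Matrix.vecMulVec x y := by
  have hn : 0 < n := by
    have h1 := C.rank_le_height
    omega
  have hm : 0 < m := by
    have h1 := C.rank_le_width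
    omega
  obtain ⟨w, t, hw, hfac⟩ := rank_one_factor C hrank
  obtain ⟨x₀, -, hx₀⟩ := Finset.exists_max_image Finset.univ (fun i => |w i|)
    ⟨⟨0, hn⟩, Finset.mem_univ _⟩
  set α : ℝ := |w x₀| with hαdef
  have hα : 0 < α := by
    obtain ⟨i, hi⟩ := Function.ne_iff.mp hw
    exact lt_of_lt_of_le (abs_pos.mpr hi) (hx₀ i (Finset.mem_univ _))
  set a : Fin n → ℝ := fun i => w i / α with hadef
  set b : Fin m → ℝ := fun j => α * t j with hbdef
  have hab : ∀ i j, C i j = a i * b j := by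
    intro i j
    rw [hfac i j]
    simp only [hadef, hbdef]
    field_simp
  have ha : ∀ i, |a i| ≤ 1 := by
    intro i
    simp only [hadef]
    rw [abs_div, hαdef, abs_abs]
    exact (div_le_one hα).mpr (hx₀ i (Finset.mem_univ _))
  have ha0 : |a x₀| = 1 := by
    simp only [hadef]
    rw [abs_div, hαdef, abs_abs]
    exact div_self hα.ne'
  have hb : ∀ j, |b j| ≤ 1 := by
    intro j
    have h1 := abs_le_one_of_mem_cor hC x₀ j
    rw [hab x₀ j, abs_mul, ha0, one_mul] at h1
    exact h1
  constructor
  · intro hext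
    have hb1 : ∀ j, |b j| = 1 := by
      intro j
      by_contra hne
      have hblt : |b j| < 1 := lt_of_le_of_ne (hb j) hne
      set ε : ℝ := 1 - |b j| with hε
      have hε0 : 0 < ε := by rw [hε]; linarith
      have hbp : ∀ y, |Function.update b j (b j + ε) y| ≤ 1 := by
        intro y
        rcases eq_or_ne y j with rfl | hyj
        · rw [Function.update_self]
          calc |b y + ε| ≤ |b y| + |ε| := abs_add_le _ _
            _ = |b y| + ε := by rw [abs_of_pos hε0]
            _ = 1 := by rw [hε]; ring
        · rw [Function.update_of_ne hyj]; exact hb y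
      have hbm : ∀ y, |Function.update b j (b j - ε) y| ≤ 1 := by
        intro y
        rcases eq_or_ne y j with rfl | hyj
        · rw [Function.update_self]
          calc |b y - ε| ≤ |b y| + |ε| := by
                have := abs_add_le (b y) (-ε)
                simpa [sub_eq_add_neg] using this
            _ = |b y| + ε := by rw [abs_of_pos hε0]
            _ = 1 := by rw [hε]; ring
        · rw [Function.update_of_ne hyj]; exact hb y
      have hm1 : Matrix.vecMulVec a (Function.update b j (b j + ε)) ∈ Cor n m :=
        vecMulVec_mem_cor hn hm a _ ha hbp
      have hm2 : Matrix.vecMulVec a (Function.update b j (b j - ε)) ∈ Cor n m :=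
        vecMulVec_mem_cor hn hm a _ ha hbm
      have heq : C = (1/2 : ℝ) • Matrix.vecMulVec a (Function.update b j (b j + ε)) +
          (1 - (1:ℝ)/2) • Matrix.vecMulVec a (Function.update b j (b j - ε)) := by
        ext i y
        rw [Matrix.add_apply, Matrix.smul_apply, Matrix.smul_apply, smul_eq_mul, smul_eq_mul,
          hab i y]
        rcases eq_or_ne y j with rfl | hyj
        · rw [Matrix.vecMulVec_apply, Matrix.vecMulVec_apply, Function.update_self,
            Function.update_self]
          ring
        · rw [Matrix.vecMulVec_apply, Matrix.vecMulVec_apply, Function.update_of_ne hyj,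
            Function.update_of_ne hyj]
          ring
      obtain ⟨hC1, -⟩ := hext.2 _ hm1 _ hm2 (1/2) (by norm_num) (by norm_num) heq
      have h3 := congrFun (congrFun hC1 x₀) j
      rw [Matrix.vecMulVec_apply, Function.update_self, hab x₀ j] at h3
      have hax : a x₀ ≠ 0 := by
        intro h
        rw [h] at ha0
        simp at ha0
      have h4 := mul_left_cancel₀ hax h3
      linarith
    have hbj0 : b ⟨0, hm⟩ ≠ 0 := by
      intro h
      have h1 := hb1 ⟨0, hm⟩
      rw [h] at h1
      simp at h1
    have ha1 : ∀ i, |a i| = 1 := by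
      intro i
      by_contra hne
      have halt : |a i| < 1 := lt_of_le_of_ne (ha i) hne
      set ε : ℝ := 1 - |a i| with hε
      have hε0 : 0 < ε := by rw [hε]; linarith
      have hap : ∀ x, |Function.update a i (a i + ε) x| ≤ 1 := by
        intro x
        rcases eq_or_ne x i with rfl | hxi
        · rw [Function.update_self]
          calc |a x + ε| ≤ |a x| + |ε| := abs_add_le _ _
            _ = |a x| + ε := by rw [abs_of_pos hε0]
            _ = 1 := by rw [hε]; ring
        · rw [Function.update_of_ne hxi]; exact ha x
      have ham : ∀ x, |Function.update a i (a i - ε) x| ≤ 1 := by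
        intro x
        rcases eq_or_ne x i with rfl | hxi
        · rw [Function.update_self]
          calc |a x - ε| ≤ |a x| + |ε| := by
                have := abs_add_le (a x) (-ε)
                simpa [sub_eq_add_neg] using this
            _ = |a x| + ε := by rw [abs_of_pos hε0]
            _ = 1 := by rw [hε]; ring
        · rw [Function.update_of_ne hxi]; exact ha x
      have hm1 : Matrix.vecMulVec (Function.update a i (a i + ε)) b ∈ Cor n m :=
        vecMulVec_mem_cor hn hm _ b hap hb
      have hm2 : Matrix.vecMulVec (Function.update a i (a i - ε)) b ∈ Cor n m :=
        vecMulVec_mem_cor hn hm _ b ham hb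
      have heq : C = (1/2 : ℝ) • Matrix.vecMulVec (Function.update a i (a i + ε)) b +
          (1 - (1:ℝ)/2) • Matrix.vecMulVec (Function.update a i (a i - ε)) b := by
        ext x y
        rw [Matrix.add_apply, Matrix.smul_apply, Matrix.smul_apply, smul_eq_mul, smul_eq_mul,
          hab x y]
        rcases eq_or_ne x i with rfl | hxi
        · rw [Matrix.vecMulVec_apply, Matrix.vecMulVec_apply, Function.update_self,
            Function.update_self]
          ring
        · rw [Matrix.vecMulVec_apply, Matrix.vecMulVec_apply, Function.update_of_ne hxi,
            Function.update_of_ne hxi]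
          ring
      obtain ⟨hC1, -⟩ := hext.2 _ hm1 _ hm2 (1/2) (by norm_num) (by norm_num) heq
      have h3 := congrFun (congrFun hC1 i) ⟨0, hm⟩
      rw [Matrix.vecMulVec_apply, Function.update_self, hab i ⟨0, hm⟩] at h3
      have h4 := mul_right_cancel₀ hbj0 h3
      linarith
    refine ⟨a, b, fun i => (abs_eq (by norm_num : (0:ℝ) ≤ 1)).mp (ha1 i),
      fun j => (abs_eq (by norm_num : (0:ℝ) ≤ 1)).mp (hb1 j), ?_⟩
    ext i j
    rw [hab i j, Matrix.vecMulVec_apply]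
  · rintro ⟨x, y, hx, hy, hCeq⟩
    refine ⟨hC, fun C₁ h1 C₂ h2 l hl0 hl1 heq => ?_⟩
    have key : ∀ i j, C₁ i j = C i j ∧ C₂ i j = C i j := by
      intro i j
      have e1 := congrFun (congrFun heq i) j
      rw [Matrix.add_apply, Matrix.smul_apply, Matrix.smul_apply, smul_eq_mul, smul_eq_mul] at e1
      have b1 := abs_le.mp (abs_le_one_of_mem_cor h1 i j)
      have b2 := abs_le.mp (abs_le_one_of_mem_cor h2 i j)
      have hp : C i j = 1 ∨ C i j = -1 := by
        rw [hCeq]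
        rcases hx i with h | h <;> rcases hy j with h' | h' <;>
          norm_num [Matrix.vecMulVec_apply, h, h']
      obtain ⟨k1, k2⟩ := extreme_entry hp (abs_le_one_of_mem_cor h1 i j)
        (abs_le_one_of_mem_cor h2 i j) hl0 hl1 e1
      exact ⟨k1, k2⟩
    exact ⟨Matrix.ext fun i j => (key i j).1, Matrix.ext fun i j => (key i j).2⟩
end

section
/- Let C* ∈ Cor(n,m), let Ĉ* ∈ E_{n+m} be a PSD completion of C*, and let Z be a real symmetric positive semidefinite (n+m)×(n+m) matrix such that Z_{ij} = 0 whenever i ≠ j and either both i,j ≤ n or both i,j > n, and such that Tr(Ĉ* Z) = 0. Then for every C ∈ Cor(n,m) one has −2 Σ_{x∈[n]} Σ_{y∈[m]} Z_{x, n+y} C_{xy} ≤ Σ_{i=1}^{n+m} Z_{ii}, and equality holds for C = C*; i.e., the corresponding hyperplane supports Cor(n,m) at C*. -/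
open Matrix Real
open scoped RealInnerProductSpace

/-!
For `C ∈ Cor(n, m)` the Gram matrix `X` of the unit vectors realising `C` is a PSD completion
of `C`, and `Tr(X Z) ≥ 0` since `X` and `Z` are both PSD. Because `X` has unit diagonal and the
two diagonal blocks of `Z` are diagonal, `Tr(X Z) = ∑ᵢ Zᵢᵢ + 2 ∑ₓᵧ Z_{x,n+y} C_{xy}`. This gives
the inequality, and the same identity for `Ĉ*`, where the trace vanishes, gives equality.
-/

namespace Matrix

open scoped ComplexOrder in
theorem PosSemidef.trace_mul_nonneg {ι 𝕜 : Type*} [Fintype ι] [RCLike 𝕜] {X Z : Matrix ι ι 𝕜}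
    (hX : X.PosSemidef) (hZ : Z.PosSemidef) : 0 ≤ (X * Z).trace := by
  classical
  obtain ⟨B, rfl⟩ : ∃ B : Matrix ι ι 𝕜, Z = Bᴴ * B := by
    open scoped MatrixOrder Matrix.Norms.L2Operator in
    exact CStarAlgebra.nonneg_iff_eq_star_mul_self.mp hZ.nonneg
  rw [← Matrix.mul_assoc, Matrix.trace_mul_cycle]
  exact (hX.mul_mul_conjTranspose_same B).trace_nonneg

theorem trace_mul_eq_trace_of_isDiag {ι R : Type*} [Fintype ι] [NonAssocSemiring R]
    {X Z : Matrix ι ι R} (hX : ∀ i, X i i = 1) (hZ : Z.IsDiag) : (X * Z).trace = Z.trace := by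
  classical
  rw [← hZ.diagonal_diag]
  simp [trace, hX]

end Matrix

section Completion

variable {n m : ℕ}

theorem trace_mul_eq_diag_add_offDiagBlock {R : Type*} [CommRing R]
    {X Z : Matrix (Fin (n + m)) (Fin (n + m)) R} (hX : X.IsSymm) (hXd : ∀ i, X i i = 1)
    (hZ : Z.IsSymm)
    (hblock : ∀ i j : Fin (n + m), i ≠ j →
      ((i.val < n ∧ j.val < n) ∨ (n ≤ i.val ∧ n ≤ j.val)) → Z i j = 0) :
    (X * Z).trace = ∑ i, Z i i +
      2 * ∑ x : Fin n, ∑ y : Fin m,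
        Z (Fin.castAdd m x) (Fin.natAdd n y) * X (Fin.castAdd m x) (Fin.natAdd n y) := by
  have hleft : (Z.submatrix (Fin.castAdd m) (Fin.castAdd m)).IsDiag := fun x x' hxx' =>
    hblock _ _ (by simpa [Fin.ext_iff] using hxx') (Or.inl ⟨x.isLt, x'.isLt⟩)
  have hright : (Z.submatrix (Fin.natAdd n) (Fin.natAdd n)).IsDiag := fun y y' hyy' =>
    hblock _ _ (by simpa [Fin.ext_iff] using hyy') (Or.inr ⟨by simp, by simp⟩)
  have hleft_tr := trace_mul_eq_trace_of_isDiag (X := X.submatrix (Fin.castAdd m) (Fin.castAdd m))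
    (fun _ => hXd _) hleft
  have hright_tr := trace_mul_eq_trace_of_isDiag (X := X.submatrix (Fin.natAdd n) (Fin.natAdd n))
    (fun _ => hXd _) hright
  simp only [trace, diag, mul_apply, submatrix_apply, Fin.sum_univ_add,
    Finset.sum_add_distrib] at hleft_tr hright_tr ⊢
  rw [hleft_tr, hright_tr, Finset.sum_comm (γ := Fin m)]
  simp only [hX.apply, hZ.apply, mul_comm (X _ _)]
  ring

theorem IsPSDCompletion.trace_mul_eq {X Z : Matrix (Fin (n + m)) (Fin (n + m)) ℝ}
    {C : Matrix (Fin n) (Fin m) ℝ} (hX : IsPSDCompletion n m X C) (hZ : Z.IsSymm)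
    (hblock : ∀ i j : Fin (n + m), i ≠ j →
      ((i.val < n ∧ j.val < n) ∨ (n ≤ i.val ∧ n ≤ j.val)) → Z i j = 0) :
    (X * Z).trace = ∑ i, Z i i +
      2 * ∑ x : Fin n, ∑ y : Fin m, Z (Fin.castAdd m x) (Fin.natAdd n y) * C x y := by
  obtain ⟨⟨hXpsd, hXd⟩, hXC⟩ := hX
  rw [trace_mul_eq_diag_add_offDiagBlock (isHermitian_iff_isSymm.mp hXpsd.isHermitian) hXd hZ
    hblock]
  simp only [hXC]

theorem exists_isPSDCompletion_of_mem_Cor {C : Matrix (Fin n) (Fin m) ℝ} (hC : C ∈ Cor n m) :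
    ∃ X, IsPSDCompletion n m X C := by
  obtain ⟨u, v, hu, hv, huv⟩ := hC
  have hunit : ∀ i, ‖(Fin.addCases u v i : EuclideanSpace ℝ (Fin (n + m)))‖ = 1 :=
    Fin.addCases (by simpa using hu) (by simpa using hv)
  refine ⟨gram ℝ (Fin.addCases u v), ⟨posSemidef_gram ℝ _, fun i => ?_⟩, fun x y => ?_⟩
  · rw [gram_apply, real_inner_self_eq_norm_sq, hunit, one_pow]
  · simp [gram_apply, huv]

end Completion

theorem stmt6_general (n m : ℕ) (Cstar : Matrix (Fin n) (Fin m) ℝ)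
    (Chat : Matrix (Fin (n + m)) (Fin (n + m)) ℝ)
    (hChat : IsPSDCompletion n m Chat Cstar)
    (Z : Matrix (Fin (n + m)) (Fin (n + m)) ℝ) (hZ : Z.PosSemidef)
    (hblock : ∀ i j : Fin (n + m), i ≠ j →
      ((i.val < n ∧ j.val < n) ∨ (n ≤ i.val ∧ n ≤ j.val)) → Z i j = 0)
    (htrace : (Chat * Z).trace = 0) :
    (∀ C ∈ Cor n m,
      -2 * ∑ x : Fin n, ∑ y : Fin m,
          Z (Fin.castAdd m x) (Fin.natAdd n y) * C x y ≤ ∑ i, Z i i) ∧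
    -2 * ∑ x : Fin n, ∑ y : Fin m,
        Z (Fin.castAdd m x) (Fin.natAdd n y) * Cstar x y = ∑ i, Z i i := by
  have hZsymm : Z.IsSymm := isHermitian_iff_isSymm.mp hZ.isHermitian
  refine ⟨fun C hC => ?_, ?_⟩
  · obtain ⟨X, hX⟩ := exists_isPSDCompletion_of_mem_Cor hC
    have htrace_nonneg := hX.1.1.trace_mul_nonneg hZ
    rw [hX.trace_mul_eq hZsymm hblock] at htrace_nonneg
    linarith
  · rw [hChat.trace_mul_eq hZsymm hblock] at htrace
    linarith

theorem stmt6 (n m : ℕ) (Cstar : Matrix (Fin n) (Fin m) ℝ) (hCs : Cstar ∈ Cor n m)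
    (Chat : Matrix (Fin (n + m)) (Fin (n + m)) ℝ)
    (hChat : IsPSDCompletion n m Chat Cstar)
    (Z : Matrix (Fin (n + m)) (Fin (n + m)) ℝ) (hZ : Z.PosSemidef)
    (hblock : ∀ i j : Fin (n + m), i ≠ j →
      ((i.val < n ∧ j.val < n) ∨ (n ≤ i.val ∧ n ≤ j.val)) → Z i j = 0)
    (htrace : (Chat * Z).trace = 0) :
    (∀ C ∈ Cor n m,
      -2 * ∑ x : Fin n, ∑ y : Fin m,
          Z (Fin.castAdd m x) (Fin.natAdd n y) * C x y ≤ ∑ i, Z i i) ∧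
    -2 * ∑ x : Fin n, ∑ y : Fin m,
        Z (Fin.castAdd m x) (Fin.natAdd n y) * Cstar x y = ∑ i, Z i i :=
  stmt6_general n m Cstar Chat hChat Z hZ hblock htrace
end

section
/- Let 0 ≤ θ₁, θ₂, θ₃ ≤ π. The 3×3 real symmetric matrix C with unit diagonal and off-diagonal entries C₁₂ = cos θ₁, C₂₃ = cos θ₂, C₁₃ = cos θ₃ is positive semidefinite if and only if θ₁ ≤ θ₂ + θ₃, θ₂ ≤ θ₁ + θ₃, θ₃ ≤ θ₁ + θ₂, and θ₁ + θ₂ + θ₃ ≤ 2π. -/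
/-!
Eliminating the third coordinate (Schur complement at the last diagonal entry) shows that the
unit-diagonal matrix with off-diagonal entries `a, b, c` is positive semidefinite iff
`(a - b c)² ≤ (1 - b²)(1 - c²)`. For `a = cos θ₁`, `b = cos θ₂`, `c = cos θ₃` this reads
`|cos θ₁ - cos θ₂ cos θ₃| ≤ sin θ₂ sin θ₃`, i.e. `cos (θ₂ + θ₃) ≤ cos θ₁ ≤ cos (θ₂ - θ₃)`, and
since `cos` is strictly decreasing on `[0, π]` these two inequalities are the triangle
inequalities and the perimeter bound.
-/

open Matrix Real

lemma quadratic_nonneg_of_sq_le_mul {p q r : ℝ} (hp : 0 ≤ p) (hr : 0 ≤ r) (hq : q ^ 2 ≤ p * r)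
    (u v : ℝ) : 0 ≤ p * u ^ 2 + 2 * q * u * v + r * v ^ 2 := by
  rcases hp.eq_or_lt with rfl | hp
  · obtain rfl : q = 0 := by nlinarith [sq_nonneg q]
    nlinarith [sq_nonneg v]
  · have : 0 ≤ p * (p * u ^ 2 + 2 * q * u * v + r * v ^ 2) := by
      nlinarith [sq_nonneg (p * u + q * v), mul_nonneg (sub_nonneg.2 hq) (sq_nonneg v)]
    exact nonneg_of_mul_nonneg_right this hp

lemma posSemidef_unitDiagonal_fin_three_iff {a b c : ℝ} (hb : b ^ 2 ≤ 1) (hc : c ^ 2 ≤ 1) :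
    (!![1, a, c; a, 1, b; c, b, 1] : Matrix (Fin 3) (Fin 3) ℝ).PosSemidef ↔
      (a - b * c) ^ 2 ≤ (1 - b ^ 2) * (1 - c ^ 2) := by
  constructor
  · intro h
    have hdet := h.det_nonneg
    simp only [det_fin_three, of_apply, cons_val', cons_val_zero, cons_val_one, cons_val,
      cons_val_fin_one] at hdet
    linear_combination hdet
  · intro h
    refine PosSemidef.of_dotProduct_mulVec_nonneg ?_ fun x => ?_
    · ext i j
      fin_cases i <;> fin_cases j <;> simp
    · have hschur := quadratic_nonneg_of_sq_le_mul (q := a - b * c) (sub_nonneg.2 hc)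
        (sub_nonneg.2 hb) (by linarith) (x 0) (x 1)
      simp only [dotProduct, mulVec, Fin.sum_univ_three, of_apply, cons_val', cons_val_zero,
        cons_val_one, cons_val, cons_val_fin_one, Pi.star_apply, star_trivial]
      nlinarith [sq_nonneg (x 2 + c * x 0 + b * x 1)]

lemma abs_sub_cos_mul_cos_le_sin_mul_sin_iff (a y z : ℝ) :
    |a - cos y * cos z| ≤ sin y * sin z ↔ cos (y + z) ≤ a ∧ a ≤ cos (y - z) := by
  rw [abs_le, cos_add, cos_sub]
  constructor <;> rintro ⟨h, h'⟩ <;> constructor <;> linarith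

lemma cos_le_cos_sub_iff {x y z : ℝ} (hx : x ∈ Set.Icc 0 π) (hy : y ∈ Set.Icc 0 π)
    (hz : z ∈ Set.Icc 0 π) : cos x ≤ cos (y - z) ↔ |y - z| ≤ x := by
  rw [← cos_abs (y - z), strictAntiOn_cos.le_iff_ge hx]
  exact ⟨abs_nonneg _, abs_sub_le_iff.2 ⟨by linarith [hy.2, hz.1], by linarith [hy.1, hz.2]⟩⟩

lemma cos_add_le_cos_iff {x y z : ℝ} (hx : x ∈ Set.Icc 0 π) (hy : y ∈ Set.Icc 0 π)
    (hz : z ∈ Set.Icc 0 π) : cos (y + z) ≤ cos x ↔ x ≤ y + z ∧ x + y + z ≤ 2 * π := by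
  obtain ⟨hy0, hyπ⟩ := hy
  obtain ⟨hz0, hzπ⟩ := hz
  rcases le_or_gt (y + z) π with hyz | hyz
  · rw [strictAntiOn_cos.le_iff_ge ⟨by linarith, hyz⟩ hx]
    exact ⟨fun h => ⟨h, by linarith [hx.2]⟩, And.left⟩
  · rw [← cos_two_pi_sub, strictAntiOn_cos.le_iff_ge ⟨by linarith, by linarith⟩ hx]
    exact ⟨fun h => ⟨by linarith [hx.2], by linarith⟩, fun h => by linarith [h.2]⟩

theorem stmt11 (θ₁ θ₂ θ₃ : ℝ)
    (h₁ : θ₁ ∈ Set.Icc 0 π) (h₂ : θ₂ ∈ Set.Icc 0 π) (h₃ : θ₃ ∈ Set.Icc 0 π) :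
    (!![1, Real.cos θ₁, Real.cos θ₃;
        Real.cos θ₁, 1, Real.cos θ₂;
        Real.cos θ₃, Real.cos θ₂, 1] : Matrix (Fin 3) (Fin 3) ℝ).PosSemidef ↔
      (θ₁ ≤ θ₂ + θ₃ ∧ θ₂ ≤ θ₁ + θ₃ ∧ θ₃ ≤ θ₁ + θ₂ ∧ θ₁ + θ₂ + θ₃ ≤ 2 * π) := by
  have hsin : 0 ≤ sin θ₂ * sin θ₃ :=
    mul_nonneg (sin_nonneg_of_mem_Icc h₂) (sin_nonneg_of_mem_Icc h₃)
  have hsin_sq : (1 - cos θ₂ ^ 2) * (1 - cos θ₃ ^ 2) = (sin θ₂ * sin θ₃) ^ 2 := by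
    rw [mul_pow, ← sin_sq, ← sin_sq]
  rw [posSemidef_unitDiagonal_fin_three_iff (cos_sq_le_one θ₂) (cos_sq_le_one θ₃), hsin_sq,
    sq_le_sq, abs_of_nonneg hsin, abs_sub_cos_mul_cos_le_sin_mul_sin_iff,
    cos_add_le_cos_iff h₁ h₂ h₃, cos_le_cos_sub_iff h₁ h₂ h₃, abs_sub_le_iff]
  constructor
  · rintro ⟨⟨h₁₂₃, hsum⟩, h₂₃, h₃₂⟩
    exact ⟨h₁₂₃, by linarith, by linarith, hsum⟩
  · rintro ⟨h₁₂₃, h₂₁₃, h₃₁₂, hsum⟩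
    exact ⟨⟨h₁₂₃, hsum⟩, by linarith, by linarith⟩
end

section
/- Let 0 ≤ θ₁, θ₂, θ₃ ≤ π satisfy θ₁ ≤ θ₂ + θ₃, θ₂ ≤ θ₁ + θ₃, θ₃ ≤ θ₁ + θ₂, and θ₁ + θ₂ + θ₃ ≤ 2π, and let C be the 3×3 real symmetric matrix with unit diagonal and off-diagonal entries C₁₂ = cos θ₁, C₂₃ = cos θ₂, C₁₃ = cos θ₃ (which is positive semidefinite). Then C is singular (det C = 0) if and only if at least one of these four inequalities holds with equality. -/
open Matrix Real

theorem stmt12 (θ₁ θ₂ θ₃ : ℝ)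
    (h₁ : θ₁ ∈ Set.Icc 0 π) (h₂ : θ₂ ∈ Set.Icc 0 π) (h₃ : θ₃ ∈ Set.Icc 0 π)
    (h₄ : θ₁ ≤ θ₂ + θ₃) (h₅ : θ₂ ≤ θ₁ + θ₃) (h₆ : θ₃ ≤ θ₁ + θ₂)
    (h₇ : θ₁ + θ₂ + θ₃ ≤ 2 * π) :
    (!![1, Real.cos θ₁, Real.cos θ₃;
        Real.cos θ₁, 1, Real.cos θ₂;
        Real.cos θ₃, Real.cos θ₂, 1] : Matrix (Fin 3) (Fin 3) ℝ).det = 0 ↔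
      (θ₁ = θ₂ + θ₃ ∨ θ₂ = θ₁ + θ₃ ∨ θ₃ = θ₁ + θ₂ ∨ θ₁ + θ₂ + θ₃ = 2 * π) := by
  obtain ⟨h1l, h1r⟩ := h₁
  obtain ⟨h2l, h2r⟩ := h₂
  obtain ⟨h3l, h3r⟩ := h₃
  have hdet : (!![1, Real.cos θ₁, Real.cos θ₃;
        Real.cos θ₁, 1, Real.cos θ₂;
        Real.cos θ₃, Real.cos θ₂, 1] : Matrix (Fin 3) (Fin 3) ℝ).det
      = -(Real.cos θ₁ - Real.cos (θ₂ + θ₃)) * (Real.cos θ₁ - Real.cos (θ₂ - θ₃)) := by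
    rw [Matrix.det_fin_three]
    simp [Real.cos_add, Real.cos_sub]
    have s2 : Real.sin θ₂ ^ 2 = 1 - Real.cos θ₂ ^ 2 := by
      have := Real.sin_sq_add_cos_sq θ₂; linarith
    have s3 : Real.sin θ₃ ^ 2 = 1 - Real.cos θ₃ ^ 2 := by
      have := Real.sin_sq_add_cos_sq θ₃; linarith
    nlinarith [s2, s3]
  rw [hdet]
  constructor
  · intro h
    have h' : Real.cos θ₁ = Real.cos (θ₂ + θ₃) ∨ Real.cos θ₁ = Real.cos (θ₂ - θ₃) := by
      rcases mul_eq_zero.1 h with h | h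
      · left; linarith [neg_eq_zero.1 (by linarith : -(Real.cos θ₁ - Real.cos (θ₂ + θ₃)) = 0)]
      · right; linarith
    rcases h' with h | h
    · by_cases hc : θ₂ + θ₃ ≤ π
      · left
        exact Real.injOn_cos ⟨h1l, h1r⟩ ⟨by linarith, hc⟩ h
      · right; right; right
        push_neg at hc
        have hu : Real.cos (2 * π - (θ₂ + θ₃)) = Real.cos (θ₂ + θ₃) := by
          rw [Real.cos_sub]; simp [Real.cos_two_pi, Real.sin_two_pi]
        have := Real.injOn_cos (Set.mem_Icc.2 ⟨h1l, h1r⟩)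
          (Set.mem_Icc.2 (⟨by linarith, by linarith⟩ : 0 ≤ 2 * π - (θ₂ + θ₃) ∧ 2 * π - (θ₂ + θ₃) ≤ π)) (by rw [hu]; exact h)
        linarith
    · by_cases hc : θ₃ ≤ θ₂
      · right; left
        have := Real.injOn_cos (Set.mem_Icc.2 ⟨h1l, h1r⟩)
          (Set.mem_Icc.2 (⟨by linarith, by linarith⟩ : 0 ≤ θ₂ - θ₃ ∧ θ₂ - θ₃ ≤ π)) h
        linarith
      · right; right; left
        push_neg at hc
        have hu : Real.cos (θ₃ - θ₂) = Real.cos (θ₂ - θ₃) := by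
          rw [← Real.cos_neg (θ₃ - θ₂)]; ring_nf
        have := Real.injOn_cos (Set.mem_Icc.2 ⟨h1l, h1r⟩)
          (Set.mem_Icc.2 (⟨by linarith, by linarith⟩ : 0 ≤ θ₃ - θ₂ ∧ θ₃ - θ₂ ≤ π)) (by rw [hu]; exact h)
        linarith
  · intro h
    rcases h with h | h | h | h
    · rw [h]; ring
    · have : θ₁ = θ₂ - θ₃ := by linarith
      rw [this]; ring
    · have : Real.cos θ₁ = Real.cos (θ₂ - θ₃) := by
        have : θ₁ = -(θ₂ - θ₃) := by linarith
        rw [this, Real.cos_neg]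
      rw [this]; ring
    · have : Real.cos θ₁ = Real.cos (θ₂ + θ₃) := by
        have he : θ₁ = 2 * π - (θ₂ + θ₃) := by linarith
        rw [he, Real.cos_sub]; simp [Real.cos_two_pi, Real.sin_two_pi]
      rw [this]; ring
end

section
/- Let C = (c_{xy}) ∈ [-1,1]^{2×2} and set θ_{xy} = arccos(c_{xy}) ∈ [0,π] for x, y ∈ {1,2}. Then C admits a PSD completion (i.e., there exists X ∈ E₄ with X_{x, 2+y} = c_{xy} for all x, y) if and only if max{|θ₁₁ − θ₁₂|, |θ₂₁ − θ₂₂|} ≤ min{θ₁₁ + θ₁₂, θ₂₁ + θ₂₂, 2π − (θ₁₁ + θ₁₂), 2π − (θ₂₁ + θ₂₂)}. -/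
/-!
A completion is determined by its one free entry `t = X₂₃ = cos φ`. Once `t` is fixed, the
completion exists iff both `3 × 3` principal minors through rows `{x, 2, 3}` are nonnegative:
necessity is clear, and conversely each row `x` then yields a unit vector in `ℝ³` with the
prescribed inner products against the common vectors `e₁` and `(cos φ, sin φ, 0)`, and the
Gram matrix of these four vectors is the completion. For cosines of angles in `[0, π]` the minor
factors as `(cos (β - γ) - cos α) * (cos α - cos (β + γ))`, the two factors having nonnegative
sum, so it is nonnegative iff `|β - γ| ≤ α ≤ min (β + γ) (2π - (β + γ))`. A common `φ` for both
rows exists iff the larger lower bound is at most the smallest upper bound.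
-/

open Matrix Real

/-- `X ∈ E₄` is a PSD completion of the `2 × 2` matrix `C`. -/
def IsPSDCompletion22 (X : Matrix (Fin 4) (Fin 4) ℝ)
    (C : Matrix (Fin 2) (Fin 2) ℝ) : Prop :=
  X.PosSemidef ∧ (∀ i, X i i = 1) ∧
  X 0 2 = C 0 0 ∧ X 0 3 = C 0 1 ∧ X 1 2 = C 1 0 ∧ X 1 3 = C 1 1

/-- The determinant of the correlation matrix `!![1, a, b; a, 1, c; b, c, 1]`. -/
def corrDet (a b c : ℝ) : ℝ := 1 - a ^ 2 - b ^ 2 - c ^ 2 + 2 * a * b * c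

lemma corrDet_eq_sub_sq (a b c : ℝ) :
    corrDet a b c = (1 - a ^ 2) * (1 - b ^ 2) - (c - a * b) ^ 2 := by
  unfold corrDet; ring

section PosSemidef

variable {n : Type*} {X : Matrix n n ℝ}

lemma Matrix.PosSemidef.sq_apply_le_one (hX : X.PosSemidef) (hd : ∀ i, X i i = 1) (i j : n) :
    X i j ^ 2 ≤ 1 := by
  have h := (hX.submatrix ![i, j]).det_nonneg
  have hji : X j i = X i j := by simpa using hX.isHermitian.apply i j
  rw [det_fin_two] at h
  simp only [submatrix_apply, cons_val_zero, cons_val_one, hd, hji] at h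
  nlinarith

lemma Matrix.PosSemidef.corrDet_nonneg (hX : X.PosSemidef) (hd : ∀ i, X i i = 1) (i j k : n) :
    0 ≤ corrDet (X j k) (X i j) (X i k) := by
  have h := (hX.submatrix ![i, j, k]).det_nonneg
  have hsymm : ∀ a b, X b a = X a b := fun a b => by simpa using hX.isHermitian.apply a b
  rw [det_fin_three] at h
  simp only [submatrix_apply, cons_val_zero, cons_val_one, cons_val_two, tail_cons, head_cons,
    hd, hsymm i j, hsymm i k, hsymm j k] at h
  unfold corrDet
  linarith

end PosSemidef

/-- `(b, q, r)` is a unit vector whose inner products with `(1, 0, 0)` and `(a, √(1 - a²), 0)`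
are `b` and `c`. -/
lemma exists_unit_vector_of_corrDet_nonneg {a b c : ℝ} (ha : a ^ 2 ≤ 1) (hb : b ^ 2 ≤ 1)
    (h : 0 ≤ corrDet a b c) :
    ∃ q r : ℝ, b ^ 2 + q ^ 2 + r ^ 2 = 1 ∧ b * a + q * √(1 - a ^ 2) = c := by
  rw [corrDet_eq_sub_sq] at h
  rcases ha.eq_or_lt with ha | ha
  · have hc : c = a * b := by
      rw [ha, sub_self, zero_mul, sub_nonneg] at h
      nlinarith [sq_nonneg (c - a * b)]
    refine ⟨0, √(1 - b ^ 2), ?_, by rw [hc]; ring⟩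
    rw [sq_sqrt (by linarith)]; ring
  · set s := √(1 - a ^ 2)
    have hs : 0 < s := sqrt_pos.2 (by linarith)
    have hs2 : s ^ 2 = 1 - a ^ 2 := sq_sqrt (by linarith)
    set q := (c - a * b) / s
    have hq : q * s = c - a * b := div_mul_cancel₀ _ hs.ne'
    have hq2 : q ^ 2 ≤ 1 - b ^ 2 := by
      refine le_of_mul_le_mul_right ?_ (pow_pos hs 2)
      rw [← mul_pow, hq, hs2]
      linarith
    refine ⟨q, √(1 - b ^ 2 - q ^ 2), ?_, by linarith⟩
    rw [sq_sqrt (by linarith)]; ring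

lemma exists_isPSDCompletion22_of_corrDet_nonneg {C : Matrix (Fin 2) (Fin 2) ℝ}
    (hC : ∀ x, C x 0 ^ 2 ≤ 1) {t : ℝ} (ht : t ^ 2 ≤ 1)
    (hdet : ∀ x, 0 ≤ corrDet t (C x 0) (C x 1)) :
    ∃ X, IsPSDCompletion22 X C := by
  choose q r hunit hinner using fun x => exists_unit_vector_of_corrDet_nonneg ht (hC x) (hdet x)
  let v : Fin 4 → EuclideanSpace ℝ (Fin 3) :=
    ![!₂[C 0 0, q 0, r 0], !₂[C 1 0, q 1, r 1], !₂[1, 0, 0], !₂[t, √(1 - t ^ 2), 0]]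
  have hs : √(1 - t ^ 2) ^ 2 = 1 - t ^ 2 := sq_sqrt (by linarith)
  refine ⟨gram ℝ v, posSemidef_gram ℝ v, fun i => ?_, ?_, ?_, ?_, ?_⟩ <;>
    simp only [gram_apply, EuclideanSpace.inner_eq_star_dotProduct]
  · fin_cases i <;> simp [v, dotProduct, Fin.sum_univ_three] <;> linarith [hunit 0, hunit 1]
  all_goals simp [v, dotProduct, Fin.sum_univ_three]
  all_goals linarith [hinner 0, hinner 1]

lemma exists_isPSDCompletion22_iff {C : Matrix (Fin 2) (Fin 2) ℝ} (hC : ∀ x, C x 0 ^ 2 ≤ 1) :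
    (∃ X, IsPSDCompletion22 X C) ↔
      ∃ t ∈ Set.Icc (-1 : ℝ) 1, ∀ x, 0 ≤ corrDet t (C x 0) (C x 1) := by
  constructor
  · rintro ⟨X, hX, hd, h02, h03, h12, h13⟩
    refine ⟨X 2 3, abs_le.1 ((sq_le_one_iff_abs_le_one _).1 (hX.sq_apply_le_one hd 2 3)),
      fun x => ?_⟩
    fin_cases x
    · simpa [h02, h03] using hX.corrDet_nonneg hd 0 2 3
    · simpa [h12, h13] using hX.corrDet_nonneg hd 1 2 3
  · rintro ⟨t, ht, hdet⟩
    exact exists_isPSDCompletion22_of_corrDet_nonneg hC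
      ((sq_le_one_iff_abs_le_one _).2 (abs_le.2 ht)) hdet

lemma corrDet_cos (α β γ : ℝ) :
    corrDet (cos α) (cos β) (cos γ) = (cos (β - γ) - cos α) * (cos α - cos (β + γ)) := by
  unfold corrDet
  rw [cos_sub, cos_add]
  linear_combination (-sin γ ^ 2) * sin_sq_add_cos_sq β - (1 - cos β ^ 2) * sin_sq_add_cos_sq γ

lemma mul_nonneg_iff_of_add_nonneg {x y : ℝ} (h : 0 ≤ x + y) : 0 ≤ x * y ↔ 0 ≤ x ∧ 0 ≤ y := by
  refine ⟨fun hxy => ⟨?_, ?_⟩, fun ⟨hx, hy⟩ => mul_nonneg hx hy⟩ <;> by_contra! hneg <;> nlinarith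

lemma cos_le_cos_sub_iff_s13 {α β γ : ℝ} (hα : α ∈ Set.Icc 0 π) (hβ : β ∈ Set.Icc 0 π)
    (hγ : γ ∈ Set.Icc 0 π) : cos α ≤ cos (β - γ) ↔ |β - γ| ≤ α := by
  rw [← cos_abs (β - γ)]
  refine strictAntiOn_cos.le_iff_ge hα ⟨abs_nonneg _, abs_le.2 ⟨?_, ?_⟩⟩ <;>
    linarith [hβ.1, hβ.2, hγ.1, hγ.2]

lemma cos_add_le_cos_iff_s13 {α β γ : ℝ} (hα : α ∈ Set.Icc 0 π) (hβ : β ∈ Set.Icc 0 π)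
    (hγ : γ ∈ Set.Icc 0 π) : cos (β + γ) ≤ cos α ↔ α ≤ β + γ ∧ α ≤ 2 * π - (β + γ) := by
  obtain ⟨hα0, hαπ⟩ := hα
  rcases le_total (β + γ) π with hs | hs
  · rw [strictAntiOn_cos.le_iff_ge ⟨by linarith [hβ.1, hγ.1], hs⟩ ⟨hα0, hαπ⟩]
    exact ⟨fun h => ⟨h, by linarith⟩, And.left⟩
  · rw [← cos_two_pi_sub,
      strictAntiOn_cos.le_iff_ge ⟨by linarith [hβ.2, hγ.2], by linarith⟩ ⟨hα0, hαπ⟩]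
    exact ⟨fun h => ⟨by linarith, h⟩, And.right⟩

lemma corrDet_cos_nonneg_iff {α β γ : ℝ} (hα : α ∈ Set.Icc 0 π) (hβ : β ∈ Set.Icc 0 π)
    (hγ : γ ∈ Set.Icc 0 π) :
    0 ≤ corrDet (cos α) (cos β) (cos γ) ↔ |β - γ| ≤ α ∧ α ≤ β + γ ∧ α ≤ 2 * π - (β + γ) := by
  have hsum : 0 ≤ (cos (β - γ) - cos α) + (cos α - cos (β + γ)) := by
    rw [cos_sub, cos_add]
    nlinarith [mul_nonneg (sin_nonneg_of_nonneg_of_le_pi hβ.1 hβ.2)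
      (sin_nonneg_of_nonneg_of_le_pi hγ.1 hγ.2)]
  rw [corrDet_cos, mul_nonneg_iff_of_add_nonneg hsum, sub_nonneg, sub_nonneg,
    cos_le_cos_sub_iff_s13 hα hβ hγ, cos_add_le_cos_iff_s13 hα hβ hγ]

lemma corrDet_nonneg_iff {a b c : ℝ} (ha : a ∈ Set.Icc (-1) 1) (hb : b ∈ Set.Icc (-1) 1)
    (hc : c ∈ Set.Icc (-1) 1) :
    0 ≤ corrDet a b c ↔ |arccos b - arccos c| ≤ arccos a ∧ arccos a ≤ arccos b + arccos c ∧
      arccos a ≤ 2 * π - (arccos b + arccos c) := by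
  have hI : ∀ x, arccos x ∈ Set.Icc 0 π := fun x => ⟨arccos_nonneg x, arccos_le_pi x⟩
  rw [← corrDet_cos_nonneg_iff (hI a) (hI b) (hI c), cos_arccos ha.1 ha.2, cos_arccos hb.1 hb.2,
    cos_arccos hc.1 hc.2]
theorem stmt13 (C : Matrix (Fin 2) (Fin 2) ℝ)
    (hC : ∀ x y, C x y ∈ Set.Icc (-1 : ℝ) 1)
    (θ : Fin 2 → Fin 2 → ℝ) (hθ : ∀ x y, θ x y = Real.arccos (C x y)) :
    (∃ X, IsPSDCompletion22 X C) ↔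
      max |θ 0 0 - θ 0 1| |θ 1 0 - θ 1 1| ≤
        min (min (θ 0 0 + θ 0 1) (θ 1 0 + θ 1 1))
            (min (2 * π - (θ 0 0 + θ 0 1)) (2 * π - (θ 1 0 + θ 1 1))) := by
  rw [exists_isPSDCompletion22_iff fun x => (sq_le_one_iff_abs_le_one _).2 (abs_le.2 (hC x 0))]
  constructor
  · rintro ⟨t, ht, hdet⟩
    have h0 := (corrDet_nonneg_iff ht (hC 0 0) (hC 0 1)).1 (hdet 0)
    have h1 := (corrDet_nonneg_iff ht (hC 1 0) (hC 1 1)).1 (hdet 1)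
    simp only [← hθ] at h0 h1
    simp only [max_le_iff, le_min_iff]
    refine ⟨⟨⟨?_, ?_⟩, ?_, ?_⟩, ⟨?_, ?_⟩, ?_, ?_⟩ <;> linarith
  · intro h
    set φ := max |θ 0 0 - θ 0 1| |θ 1 0 - θ 1 1|
    obtain ⟨⟨h0, h1⟩, h0', h1'⟩ := le_min_iff.1 h |>.imp le_min_iff.1 le_min_iff.1
    have hcos : cos φ ∈ Set.Icc (-1 : ℝ) 1 := ⟨neg_one_le_cos φ, cos_le_one φ⟩
    refine ⟨cos φ, hcos, fun x => ?_⟩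
    rw [corrDet_nonneg_iff hcos (hC x 0) (hC x 1), ← hθ, ← hθ,
      arccos_cos (le_max_of_le_left (abs_nonneg _)) (by linarith)]
    fin_cases x
    · exact ⟨le_max_left _ _, h0, h0'⟩
    · exact ⟨le_max_right _ _, h1, h1'⟩
end

section
/- Let C = (c_{xy}) ∈ [-1,1]^{2×2} with θ_{xy} = arccos(c_{xy}) ∈ [0,π], and suppose the cycle equality θ₁₂ = θ₁₁ + θ₂₁ + θ₂₂ holds (paper's θ₁₄ = θ₁₃ + θ₂₃ + θ₂₄). Then every PSD completion X ∈ E₄ of C has uniquely determined unspecified entries, namely X₁₂ = c₁₁ c₂₁ − √((1 − c₁₁²)(1 − c₂₁²)) and X₃₄ = c₂₁ c₂₂ − √((1 − c₂₁²)(1 − c₂₂²)); equivalently arccos(X₁₂) = θ₁₁ + θ₂₁ = θ₁₂ − θ₂₂ and arccos(X₃₄) = θ₂₁ + θ₂₂ = θ₁₂ − θ₁₁. In particular, C has a unique PSD completion. -/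
open Matrix Real

private lemma psd_det_nonneg {n : ℕ} {M : Matrix (Fin n) (Fin n) ℝ} (hM : M.PosSemidef) :
    0 ≤ M.det := by
  rw [hM.isHermitian.det_eq_prod_eigenvalues]
  exact Finset.prod_nonneg fun i _ => hM.eigenvalues_nonneg i

private lemma arccos_antitone {x y : ℝ} (h : x ≤ y) : Real.arccos y ≤ Real.arccos x := by
  unfold Real.arccos
  have := Real.monotone_arcsin h
  linarith

/-- 2×2 minor bound: entries of a PSD matrix with unit diagonal lie in [-1,1]. -/
private lemma entry_sq_le_one {X : Matrix (Fin 4) (Fin 4) ℝ} (hX : X.PosSemidef)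
    (hd : ∀ i, X i i = 1) (i j : Fin 4) : (X i j) ^ 2 ≤ 1 := by
  have hsub := psd_det_nonneg (hX.submatrix ![i, j])
  have hsym : X j i = X i j := by
    have := hX.1.apply j i
    simpa using this.symm
  rw [Matrix.det_fin_two] at hsub
  simp only [Matrix.submatrix_apply] at hsub
  simp only [Matrix.cons_val_zero, Matrix.cons_val_one, Matrix.head_cons] at hsub
  rw [hd, hd, hsym] at hsub
  nlinarith

/-- 3×3 minor inequality. -/
private lemma minor3 {X : Matrix (Fin 4) (Fin 4) ℝ} (hX : X.PosSemidef)
    (hd : ∀ i, X i i = 1) (i j k : Fin 4) :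
    (X i j - X i k * X j k) ^ 2 ≤ (1 - (X i k) ^ 2) * (1 - (X j k) ^ 2) := by
  have hsym : ∀ a b, X b a = X a b := by
    intro a b
    have := hX.1.apply b a
    simpa using this.symm
  have hsub := psd_det_nonneg (hX.submatrix ![i, j, k])
  rw [Matrix.det_fin_three] at hsub
  simp only [Matrix.submatrix_apply, Matrix.cons_val_zero, Matrix.cons_val_one,
    Matrix.head_cons, Matrix.cons_val_two, Matrix.tail_cons] at hsub
  rw [hd, hd, hd, hsym i j, hsym i k, hsym j k] at hsub
  nlinarith

private lemma tri_upper {a b c : ℝ} (ha : -1 ≤ a) (ha' : a ≤ 1) (hb : -1 ≤ b) (hb' : b ≤ 1)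
    (h : (c - a * b) ^ 2 ≤ (1 - a ^ 2) * (1 - b ^ 2))
    (hsum : Real.arccos a + Real.arccos b ≤ π) :
    Real.arccos c ≤ Real.arccos a + Real.arccos b := by
  have h1 : (0:ℝ) ≤ 1 - a ^ 2 := by nlinarith
  have habs : |c - a * b| ≤ Real.sqrt (1 - a ^ 2) * Real.sqrt (1 - b ^ 2) := by
    have := Real.sqrt_le_sqrt h
    rwa [Real.sqrt_sq_eq_abs, Real.sqrt_mul h1] at this
  have hlo : Real.cos (Real.arccos a + Real.arccos b) ≤ c := by
    rw [Real.cos_add, Real.cos_arccos ha ha', Real.cos_arccos hb hb',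
      Real.sin_arccos, Real.sin_arccos]
    have := (abs_le.mp habs).1
    linarith
  calc Real.arccos c ≤ Real.arccos (Real.cos (Real.arccos a + Real.arccos b)) :=
        arccos_antitone hlo
    _ = Real.arccos a + Real.arccos b := by
        exact Real.arccos_cos (by linarith [Real.arccos_nonneg a, Real.arccos_nonneg b]) hsum

private lemma tri_lower {a b c : ℝ} (ha : -1 ≤ a) (ha' : a ≤ 1) (hb : -1 ≤ b) (hb' : b ≤ 1)
    (h : (c - a * b) ^ 2 ≤ (1 - a ^ 2) * (1 - b ^ 2))
    (hab : Real.arccos b ≤ Real.arccos a) :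
    Real.arccos a - Real.arccos b ≤ Real.arccos c := by
  have h1 : (0:ℝ) ≤ 1 - a ^ 2 := by nlinarith
  have habs : |c - a * b| ≤ Real.sqrt (1 - a ^ 2) * Real.sqrt (1 - b ^ 2) := by
    have := Real.sqrt_le_sqrt h
    rwa [Real.sqrt_sq_eq_abs, Real.sqrt_mul h1] at this
  have hhi : c ≤ Real.cos (Real.arccos a - Real.arccos b) := by
    rw [Real.cos_sub, Real.cos_arccos ha ha', Real.cos_arccos hb hb',
      Real.sin_arccos, Real.sin_arccos]
    have := (abs_le.mp habs).2
    linarith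
  have hrange : Real.arccos a - Real.arccos b ≤ π :=
    by linarith [Real.arccos_le_pi a, Real.arccos_nonneg b]
  calc Real.arccos a - Real.arccos b
      = Real.arccos (Real.cos (Real.arccos a - Real.arccos b)) :=
        (Real.arccos_cos (by linarith) hrange).symm
    _ ≤ Real.arccos c := arccos_antitone hhi

set_option maxHeartbeats 1000000 in
theorem stmt15 (C : Matrix (Fin 2) (Fin 2) ℝ)
    (hC : ∀ x y, C x y ∈ Set.Icc (-1 : ℝ) 1)
    (θ : Fin 2 → Fin 2 → ℝ) (hθ : ∀ x y, θ x y = Real.arccos (C x y))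
    (hcycle : θ 0 1 = θ 0 0 + θ 1 0 + θ 1 1) :
    (∀ X, IsPSDCompletion22 X C →
       X 0 1 = C 0 0 * C 1 0 - Real.sqrt ((1 - C 0 0 ^ 2) * (1 - C 1 0 ^ 2)) ∧
       X 2 3 = C 1 0 * C 1 1 - Real.sqrt ((1 - C 1 0 ^ 2) * (1 - C 1 1 ^ 2)) ∧
       Real.arccos (X 0 1) = θ 0 0 + θ 1 0 ∧ θ 0 0 + θ 1 0 = θ 0 1 - θ 1 1 ∧
       Real.arccos (X 2 3) = θ 1 0 + θ 1 1 ∧ θ 1 0 + θ 1 1 = θ 0 1 - θ 0 0) ∧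
    (∀ X Y, IsPSDCompletion22 X C → IsPSDCompletion22 Y C → X = Y) := by
  -- basic facts about θ
  have hθnn : ∀ x y, 0 ≤ θ x y := by intro x y; rw [hθ]; exact Real.arccos_nonneg _
  have hθpi : ∀ x y, θ x y ≤ π := by intro x y; rw [hθ]; exact Real.arccos_le_pi _
  have key : ∀ X, IsPSDCompletion22 X C →
       X 0 1 = C 0 0 * C 1 0 - Real.sqrt ((1 - C 0 0 ^ 2) * (1 - C 1 0 ^ 2)) ∧
       X 2 3 = C 1 0 * C 1 1 - Real.sqrt ((1 - C 1 0 ^ 2) * (1 - C 1 1 ^ 2)) ∧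
       Real.arccos (X 0 1) = θ 0 0 + θ 1 0 ∧ θ 0 0 + θ 1 0 = θ 0 1 - θ 1 1 ∧
       Real.arccos (X 2 3) = θ 1 0 + θ 1 1 ∧ θ 1 0 + θ 1 1 = θ 0 1 - θ 0 0 := by
    rintro X ⟨hpsd, hd, h02, h03, h12, h13⟩
    have hsym : ∀ a b, X b a = X a b := by
      intro a b
      have := hpsd.1.apply b a
      simpa using this.symm
    have hX01sq := entry_sq_le_one hpsd hd 0 1
    have hX23sq := entry_sq_le_one hpsd hd 2 3
    have hX01lo : -1 ≤ X 0 1 := by nlinarith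
    have hX01hi : X 0 1 ≤ 1 := by nlinarith
    have hX23lo : -1 ≤ X 2 3 := by nlinarith
    have hX23hi : X 2 3 ≤ 1 := by nlinarith
    -- the four triangle inequalities
    have m012 := minor3 hpsd hd 0 1 2
    have m013 := minor3 hpsd hd 0 1 3
    have m231 := minor3 hpsd hd 2 3 1
    have m230 := minor3 hpsd hd 2 3 0
    rw [h02, h12] at m012
    rw [h03, h13] at m013
    rw [hsym 1 2, hsym 1 3, h12, h13] at m231
    rw [hsym 0 2, hsym 0 3, h02, h03] at m230
    have a00 : Real.arccos (C 0 0) = θ 0 0 := (hθ 0 0).symm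
    have a01 : Real.arccos (C 0 1) = θ 0 1 := (hθ 0 1).symm
    have a10 : Real.arccos (C 1 0) = θ 1 0 := (hθ 1 0).symm
    have a11 : Real.arccos (C 1 1) = θ 1 1 := (hθ 1 1).symm
    have up1 : Real.arccos (X 0 1) ≤ θ 0 0 + θ 1 0 := by
      have := tri_upper (hC 0 0).1 (hC 0 0).2 (hC 1 0).1 (hC 1 0).2 m012 ?_
      · rwa [a00, a10] at this
      · rw [a00, a10]; have := hθpi 0 1; have := hθnn 1 1; linarith
    have lo1 : θ 0 1 - θ 1 1 ≤ Real.arccos (X 0 1) := by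
      have := tri_lower (hC 0 1).1 (hC 0 1).2 (hC 1 1).1 (hC 1 1).2 m013 ?_
      · rwa [a01, a11] at this
      · rw [a01, a11]; have := hθnn 0 0; have := hθnn 1 0; linarith
    have up2 : Real.arccos (X 2 3) ≤ θ 1 0 + θ 1 1 := by
      have := tri_upper (hC 1 0).1 (hC 1 0).2 (hC 1 1).1 (hC 1 1).2 m231 ?_
      · rwa [a10, a11] at this
      · rw [a10, a11]; have := hθpi 0 1; have := hθnn 0 0; linarith
    have lo2 : θ 0 1 - θ 0 0 ≤ Real.arccos (X 2 3) := by
      have h' : (X 2 3 - C 0 1 * C 0 0) ^ 2 ≤ (1 - C 0 1 ^ 2) * (1 - C 0 0 ^ 2) := by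
        rw [mul_comm (C 0 1) (C 0 0)] at *
        nlinarith [m230]
      have := tri_lower (hC 0 1).1 (hC 0 1).2 (hC 0 0).1 (hC 0 0).2 h' ?_
      · rwa [a01, a00] at this
      · rw [a01, a00]; have := hθnn 1 0; have := hθnn 1 1; linarith
    have e1 : Real.arccos (X 0 1) = θ 0 0 + θ 1 0 := by linarith
    have e2 : Real.arccos (X 2 3) = θ 1 0 + θ 1 1 := by linarith
    have v1 : X 0 1 = C 0 0 * C 1 0 - Real.sqrt ((1 - C 0 0 ^ 2) * (1 - C 1 0 ^ 2)) := by
      have : X 0 1 = Real.cos (Real.arccos (X 0 1)) := (Real.cos_arccos hX01lo hX01hi).symm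
      rw [this, e1, hθ 0 0, hθ 1 0, Real.cos_add, Real.cos_arccos (hC 0 0).1 (hC 0 0).2,
        Real.cos_arccos (hC 1 0).1 (hC 1 0).2, Real.sin_arccos, Real.sin_arccos,
        ← Real.sqrt_mul (by nlinarith [(hC 0 0).1, (hC 0 0).2] : (0:ℝ) ≤ 1 - C 0 0 ^ 2)]
    have v2 : X 2 3 = C 1 0 * C 1 1 - Real.sqrt ((1 - C 1 0 ^ 2) * (1 - C 1 1 ^ 2)) := by
      have : X 2 3 = Real.cos (Real.arccos (X 2 3)) := (Real.cos_arccos hX23lo hX23hi).symm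
      rw [this, e2, hθ 1 0, hθ 1 1, Real.cos_add, Real.cos_arccos (hC 1 0).1 (hC 1 0).2,
        Real.cos_arccos (hC 1 1).1 (hC 1 1).2, Real.sin_arccos, Real.sin_arccos,
        ← Real.sqrt_mul (by nlinarith [(hC 1 0).1, (hC 1 0).2] : (0:ℝ) ≤ 1 - C 1 0 ^ 2)]
    exact ⟨v1, v2, e1, by linarith, e2, by linarith⟩
  refine ⟨key, ?_⟩
  intro X Y hXc hYc
  obtain ⟨vX1, vX2, -, -, -, -⟩ := key X hXc
  obtain ⟨vY1, vY2, -, -, -, -⟩ := key Y hYc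
  obtain ⟨hXpsd, hXd, hX02, hX03, hX12, hX13⟩ := hXc
  obtain ⟨hYpsd, hYd, hY02, hY03, hY12, hY13⟩ := hYc
  have hXs : ∀ a b, X b a = X a b := by
    intro a b; have := hXpsd.1.apply b a; simpa using this.symm
  have hYs : ∀ a b, Y b a = Y a b := by
    intro a b; have := hYpsd.1.apply b a; simpa using this.symm
  have tr : ∀ {a b c : ℝ}, a = c → b = c → a = b := fun h1 h2 => h1.trans h2.symm
  ext i j
  fin_cases i <;> fin_cases j
  · exact tr (hXd 0) (hYd 0)
  · exact tr vX1 vY1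
  · exact tr hX02 hY02
  · exact tr hX03 hY03
  · exact tr ((hXs 0 1).trans vX1) ((hYs 0 1).trans vY1)
  · exact tr (hXd 1) (hYd 1)
  · exact tr hX12 hY12
  · exact tr hX13 hY13
  · exact tr ((hXs 0 2).trans hX02) ((hYs 0 2).trans hY02)
  · exact tr ((hXs 1 2).trans hX12) ((hYs 1 2).trans hY12)
  · exact tr (hXd 2) (hYd 2)
  · exact tr vX2 vY2
  · exact tr ((hXs 0 3).trans hX03) ((hYs 0 3).trans hY03)
  · exact tr ((hXs 1 3).trans hX13) ((hYs 1 3).trans hY13)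
  · exact tr ((hXs 2 3).trans vX2) ((hYs 2 3).trans vY2)
  · exact tr (hXd 3) (hYd 3)
end

section
/- The CHSH correlator C = (1/√2)·[[1, 1],[1, −1]] has a unique PSD completion in E₄, namely the matrix Ĉ with unit diagonal, Ĉ₁₂ = Ĉ₃₄ = 0, and cross block (1/√2)·[[1, 1],[1, −1]]; moreover C is an extreme point of Cor(2,2). -/
open Matrix Real
open scoped RealInnerProductSpace

/-- The CHSH correlator. -/
noncomputable def CHSH : Matrix (Fin 2) (Fin 2) ℝ :=
  (1 / Real.sqrt 2) • !![1, 1; 1, -1]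

/-- Its unique PSD completion. -/
noncomputable def CHSHhat : Matrix (Fin 4) (Fin 4) ℝ :=
  !![1, 0, 1 / Real.sqrt 2, 1 / Real.sqrt 2;
     0, 1, 1 / Real.sqrt 2, -(1 / Real.sqrt 2);
     1 / Real.sqrt 2, 1 / Real.sqrt 2, 1, 0;
     1 / Real.sqrt 2, -(1 / Real.sqrt 2), 0, 1]

/-!
Write `s = √2`. The matrix `Ĉ = CHSHhat` is `V Vᵀ` for a `4 × 2` matrix `V`, and its kernel is
spanned by `k₁ = (-s, 0, 1, 1)` and `k₂ = (0, -s, 1, -1)`. If `X` is any PSD completion of `C`,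
then `k₁ᵀ X k₁ = 2 X₃₄` and `k₂ᵀ X k₂ = -2 X₃₄`, so `X₃₄ = 0`, both quadratic forms vanish, and
positivity forces `X k₁ = X k₂ = 0`; the eight linear equations this gives pin down every entry of
a symmetric unit-diagonal matrix, so `X = Ĉ`.

For extremality, write `C = λ C₁ + (1 - λ) C₂` with `Cᵢ ∈ Cor(2,2)`. The Gram matrices `Gᵢ` of the
vectors realising `Cᵢ` are completions of `Cᵢ`, so `λ G₁ + (1 - λ) G₂` completes `C` and equals
`Ĉ`. Each `Gᵢ` then also kills `k₁, k₂`, hence `Gᵢ = Ĉ` and `Cᵢ = C`.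
-/

open Matrix

lemma Matrix.PosSemidef.mulVec_eq_zero_of_smul_add_mulVec_eq_zero {n : Type*} [Fintype n]
    {A B : Matrix n n ℝ} (hA : A.PosSemidef) (hB : B.PosSemidef) {a : ℝ} (ha : 0 < a)
    {x : n → ℝ} (h : (a • A + B) *ᵥ x = 0) : A *ᵥ x = 0 := by
  have hquad : a * (star x ⬝ᵥ A *ᵥ x) + star x ⬝ᵥ B *ᵥ x = 0 := by
    simpa only [add_mulVec, smul_mulVec, dotProduct_add, dotProduct_smul, smul_eq_mul,
      dotProduct_zero] using congrArg (star x ⬝ᵥ ·) h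
  have hA₀ : star x ⬝ᵥ A *ᵥ x = 0 := by
    have hAx := hA.dotProduct_mulVec_nonneg x
    have hBx := hB.dotProduct_mulVec_nonneg x
    nlinarith
  exact (hA.dotProduct_mulVec_zero_iff x).mp hA₀

lemma Matrix.IsHermitian.eq_of_diag_eq_one {Y : Matrix (Fin 4) (Fin 4) ℝ} (hY : Y.IsHermitian)
    (hdiag : ∀ i, Y i i = 1) :
    Y = !![1, Y 0 1, Y 0 2, Y 0 3; Y 0 1, 1, Y 1 2, Y 1 3;
      Y 0 2, Y 1 2, 1, Y 2 3; Y 0 3, Y 1 3, Y 2 3, 1] := by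
  have hsymm : ∀ i j, Y j i = Y i j := fun i j => by simpa using hY.apply i j
  ext i j
  fin_cases i <;> fin_cases j <;> simp [hdiag] <;> exact hsymm _ _

lemma IsPSDCompletion22.smul_add_one_sub_smul {G₁ G₂ : Matrix (Fin 4) (Fin 4) ℝ}
    {C₁ C₂ : Matrix (Fin 2) (Fin 2) ℝ} (h₁ : IsPSDCompletion22 G₁ C₁)
    (h₂ : IsPSDCompletion22 G₂ C₂) {l : ℝ} (hl₀ : 0 ≤ l) (hl₁ : l ≤ 1) :
    IsPSDCompletion22 (l • G₁ + (1 - l) • G₂) (l • C₁ + (1 - l) • C₂) := by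
  obtain ⟨hpsd₁, hdiag₁, h₁00, h₁01, h₁10, h₁11⟩ := h₁
  obtain ⟨hpsd₂, hdiag₂, h₂00, h₂01, h₂10, h₂11⟩ := h₂
  exact ⟨(hpsd₁.smul hl₀).add (hpsd₂.smul (sub_nonneg.mpr hl₁)),
    fun i => by simp [hdiag₁, hdiag₂], by simp [h₁00, h₂00], by simp [h₁01, h₂01],
    by simp [h₁10, h₂10], by simp [h₁11, h₂11]⟩

lemma IsPSDCompletion22.right_unique {X : Matrix (Fin 4) (Fin 4) ℝ}
    {C C' : Matrix (Fin 2) (Fin 2) ℝ} (h : IsPSDCompletion22 X C)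
    (h' : IsPSDCompletion22 X C') : C = C' := by
  obtain ⟨-, -, h00, h01, h10, h11⟩ := h
  obtain ⟨-, -, h'00, h'01, h'10, h'11⟩ := h'
  ext x y
  fin_cases x <;> fin_cases y
  exacts [h00.symm.trans h'00, h01.symm.trans h'01, h10.symm.trans h'10, h11.symm.trans h'11]

lemma exists_isPSDCompletion22_of_mem_Cor {C : Matrix (Fin 2) (Fin 2) ℝ} (hC : C ∈ Cor 2 2) :
    ∃ X, IsPSDCompletion22 X C := by
  obtain ⟨u, v, hu, hv, huv⟩ := hC
  have hdiag : ∀ i, gram ℝ ![u 0, u 1, v 0, v 1] i i = 1 := by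
    intro i
    fin_cases i <;> simp [gram_apply, hu, hv]
  exact ⟨gram ℝ ![u 0, u 1, v 0, v 1], posSemidef_gram ℝ _, hdiag,
    (huv 0 0).symm, (huv 0 1).symm, (huv 1 0).symm, (huv 1 1).symm⟩

lemma CHSH_mem_Cor : CHSH ∈ Cor 2 2 := by
  refine ⟨![!₂[1, 0, 0, 0], !₂[0, 1, 0, 0]],
    ![!₂[1 / √2, 1 / √2, 0, 0], !₂[1 / √2, -(1 / √2), 0, 0]], ?_, ?_, ?_⟩
  · intro x; fin_cases x <;> simp [EuclideanSpace.norm_eq, Fin.sum_univ_four]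
  · intro y; fin_cases y <;> simp [EuclideanSpace.norm_eq, Fin.sum_univ_four] <;> norm_num
  · intro x y; fin_cases x <;> fin_cases y <;> simp [CHSH, PiLp.inner_apply, Fin.sum_univ_four]

lemma posSemidef_CHSHhat : CHSHhat.PosSemidef := by
  let V : Matrix (Fin 4) (Fin 2) ℝ := !![1, 0; 0, 1; 1 / √2, 1 / √2; 1 / √2, -(1 / √2)]
  have hV : CHSHhat = V * Vᴴ := by
    ext i j
    fin_cases i <;> fin_cases j <;> norm_num [V, CHSHhat, mul_apply, Fin.sum_univ_two, ← sq]
  exact hV ▸ posSemidef_self_mul_conjTranspose V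

lemma CHSHhat_isPSDCompletion22 : IsPSDCompletion22 CHSHhat CHSH := by
  refine ⟨posSemidef_CHSHhat, fun i => ?_, ?_, ?_, ?_, ?_⟩
  · fin_cases i <;> simp [CHSHhat]
  all_goals simp [CHSHhat, CHSH]

noncomputable def chshKer₁ : Fin 4 → ℝ := ![-√2, 0, 1, 1]

noncomputable def chshKer₂ : Fin 4 → ℝ := ![0, -√2, 1, -1]

lemma eq_CHSHhat_of_mulVec_chshKer_eq_zero {Y : Matrix (Fin 4) (Fin 4) ℝ} (hY : Y.IsHermitian)
    (hdiag : ∀ i, Y i i = 1) (h₁ : Y *ᵥ chshKer₁ = 0) (h₂ : Y *ᵥ chshKer₂ = 0) :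
    Y = CHSHhat := by
  have hs : √2 * √2 = 2 := Real.mul_self_sqrt zero_le_two
  rw [hY.eq_of_diag_eq_one hdiag] at h₁ h₂ ⊢
  set a := Y 0 1; set b := Y 0 2; set c := Y 0 3; set d := Y 1 2; set e := Y 1 3; set f := Y 2 3
  have e₁₀ := congrFun h₁ 0
  have e₁₂ := congrFun h₁ 2
  have e₁₃ := congrFun h₁ 3
  have e₂₀ := congrFun h₂ 0
  have e₂₂ := congrFun h₂ 2
  have e₂₃ := congrFun h₂ 3
  simp only [mulVec, dotProduct, Fin.isValue, of_apply, cons_val', cons_val_fin_one, cons_val_zero,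
    chshKer₁, Fin.sum_univ_four, mul_neg, one_mul, cons_val_one, mul_zero, add_zero, cons_val,
    mul_one, Pi.zero_apply, chshKer₂, zero_add] at e₁₀ e₁₂ e₁₃ e₂₀ e₂₂ e₂₃
  have hf : f = 0 := by linear_combination (e₁₂ + e₁₃ + √2 * e₁₀ + hs) / 2
  have hb : b * √2 = 1 := by linear_combination -e₁₂ + hf
  have hc : c * √2 = 1 := by linear_combination -e₁₃ + hf
  have hd : d * √2 = 1 := by linear_combination -e₂₂ - hf
  have he : -e * √2 = 1 := by linear_combination e₂₃ - hf
  have ha : a = 0 := by linear_combination (-√2 * e₂₀ + hb - hc - a * hs) / 2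
  rw [ha, hf, eq_one_div_of_mul_eq_one_left hb, eq_one_div_of_mul_eq_one_left hc,
    eq_one_div_of_mul_eq_one_left hd, neg_eq_iff_eq_neg.mp (eq_one_div_of_mul_eq_one_left he)]
  rfl

lemma IsPSDCompletion22.mulVec_chshKer_eq_zero {X : Matrix (Fin 4) (Fin 4) ℝ}
    (hX : IsPSDCompletion22 X CHSH) : X *ᵥ chshKer₁ = 0 ∧ X *ᵥ chshKer₂ = 0 := by
  obtain ⟨hpsd, hdiag, h00, h01, h10, h11⟩ := hX
  have hs : √2 * √2 = 2 := Real.mul_self_sqrt zero_le_two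
  have hform := hpsd.1.eq_of_diag_eq_one hdiag
  rw [h00, h01, h10, h11] at hform
  have q₁ : star chshKer₁ ⬝ᵥ X *ᵥ chshKer₁ = 2 * X 2 3 := by
    rw [hform]
    simp [CHSH, mulVec, dotProduct, Fin.sum_univ_four, chshKer₁]
    field_simp
    linear_combination hs
  have q₂ : star chshKer₂ ⬝ᵥ X *ᵥ chshKer₂ = -2 * X 2 3 := by
    rw [hform]
    simp [CHSH, mulVec, dotProduct, Fin.sum_univ_four, chshKer₂]
    field_simp
    linear_combination hs
  have hf : X 2 3 = 0 := by
    linarith [hpsd.dotProduct_mulVec_nonneg chshKer₁, hpsd.dotProduct_mulVec_nonneg chshKer₂]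
  exact ⟨(hpsd.dotProduct_mulVec_zero_iff _).mp (by rw [q₁, hf, mul_zero]),
    (hpsd.dotProduct_mulVec_zero_iff _).mp (by rw [q₂, hf, mul_zero])⟩

lemma IsPSDCompletion22.eq_CHSHhat {X : Matrix (Fin 4) (Fin 4) ℝ}
    (hX : IsPSDCompletion22 X CHSH) : X = CHSHhat :=
  eq_CHSHhat_of_mulVec_chshKer_eq_zero hX.1.1 hX.2.1 hX.mulVec_chshKer_eq_zero.1
    hX.mulVec_chshKer_eq_zero.2

lemma eq_CHSHhat_of_smul_add_eq_CHSHhat {A B : Matrix (Fin 4) (Fin 4) ℝ} (hA : A.PosSemidef)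
    (hAdiag : ∀ i, A i i = 1) (hB : B.PosSemidef) {a : ℝ} (ha : 0 < a)
    (h : a • A + B = CHSHhat) : A = CHSHhat := by
  obtain ⟨hk₁, hk₂⟩ := CHSHhat_isPSDCompletion22.mulVec_chshKer_eq_zero
  rw [← h] at hk₁ hk₂
  exact eq_CHSHhat_of_mulVec_chshKer_eq_zero hA.1 hAdiag
    (hA.mulVec_eq_zero_of_smul_add_mulVec_eq_zero hB ha hk₁)
    (hA.mulVec_eq_zero_of_smul_add_mulVec_eq_zero hB ha hk₂)

theorem stmt16 :
    IsPSDCompletion22 CHSHhat CHSH ∧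
    (∀ X, IsPSDCompletion22 X CHSH → X = CHSHhat) ∧
    IsExtremePt (Cor 2 2) CHSH := by
  refine ⟨CHSHhat_isPSDCompletion22, fun X hX => hX.eq_CHSHhat, CHSH_mem_Cor, ?_⟩
  intro C₁ hC₁ C₂ hC₂ l hl₀ hl₁ hC
  obtain ⟨G₁, hG₁⟩ := exists_isPSDCompletion22_of_mem_Cor hC₁
  obtain ⟨G₂, hG₂⟩ := exists_isPSDCompletion22_of_mem_Cor hC₂
  have hG : l • G₁ + (1 - l) • G₂ = CHSHhat :=
    (hC ▸ hG₁.smul_add_one_sub_smul hG₂ hl₀.le hl₁.le).eq_CHSHhat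
  have hG₁_eq : G₁ = CHSHhat :=
    eq_CHSHhat_of_smul_add_eq_CHSHhat hG₁.1 hG₁.2.1 (hG₂.1.smul (by linarith)) hl₀ hG
  have hG₂_eq : G₂ = CHSHhat :=
    eq_CHSHhat_of_smul_add_eq_CHSHhat hG₂.1 hG₂.2.1 (hG₁.1.smul hl₀.le) (by linarith)
      ((add_comm _ _).trans hG)
  exact ⟨(hG₁_eq ▸ hG₁).right_unique CHSHhat_isPSDCompletion22,
    (hG₂_eq ▸ hG₂).right_unique CHSHhat_isPSDCompletion22⟩
end

section
/- The Mayers–Yao correlator C = [[1, 0, 1/√2],[0, 1, 1/√2],[1/√2, 1/√2, 1]] has a unique PSD completion in E₆, namely the 6×6 matrix Ĉ = [[M, M],[M, M]] where M = [[1, 0, 1/√2],[0, 1, 1/√2],[1/√2, 1/√2, 1]]; moreover C is an extreme point of Cor(3,3). -/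
open Matrix Real
open scoped RealInnerProductSpace

/--  is a PSD completion of the  matrix . -/
def IsPSDCompletion33 (X : Matrix (Fin 6) (Fin 6) ℝ)
    (C : Matrix (Fin 3) (Fin 3) ℝ) : Prop :=
  X.PosSemidef ∧ (∀ i, X i i = 1) ∧
  X 0 3 = C 0 0 ∧ X 0 4 = C 0 1 ∧ X 0 5 = C 0 2 ∧
  X 1 3 = C 1 0 ∧ X 1 4 = C 1 1 ∧ X 1 5 = C 1 2 ∧
  X 2 3 = C 2 0 ∧ X 2 4 = C 2 1 ∧ X 2 5 = C 2 2

/-- The Mayers–Yao correlator. -/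
noncomputable def MY : Matrix (Fin 3) (Fin 3) ℝ :=
  !![1, 0, 1 / Real.sqrt 2;
     0, 1, 1 / Real.sqrt 2;
     1 / Real.sqrt 2, 1 / Real.sqrt 2, 1]

/-- Its unique PSD completion: the block matrix [[M, M], [M, M]] with M = MY. -/
noncomputable def MYhat : Matrix (Fin 6) (Fin 6) ℝ :=
  Matrix.of fun i j : Fin 6 => MY ⟨i.val % 3, by omega⟩ ⟨j.val % 3, by omega⟩

/-!
In a PSD matrix with unit diagonal, an off-diagonal entry equal to `1` puts `e_p - e_q` in the
kernel, so columns `p` and `q` coincide. The three `1`s of the Mayers–Yao correlator therefore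
glue the two halves of any completion together, and what is left are exactly the entries of
`[[M, M], [M, M]]`.

For extremality, write `C = λ C₁ + (1 - λ) C₂` with `Cᵢ` realised by unit vectors `uᵢ, vᵢ`. Since
all correlations are at most `1`, the diagonal `1`s of `C` force `uᵢ = vᵢ`, so each `Cᵢ` is a Gram
matrix and hence PSD. Then `Cᵢ` vanishes on the kernel vector `(1, 1, -√2)` of `C` (the relation
`u₀ + u₁ = √2 u₂`), and this together with the unit diagonal determines a symmetric `3 × 3` matrix.
-/

namespace Matrix.PosSemidef

open scoped ComplexOrder

variable {𝕜 n : Type*} [RCLike 𝕜] [Fintype n] {X Y : Matrix n n 𝕜}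

theorem apply_eq_apply_of_apply_eq_one [DecidableEq n] (hX : X.PosSemidef) {p q : n}
    (hp : X p p = 1) (hq : X q q = 1) (hpq : X p q = 1) (k : n) : X k p = X k q := by
  have hqp : X q p = 1 := by rw [← hX.1.apply q p, hpq, star_one]
  have hker : X *ᵥ (Pi.single p 1 - Pi.single q 1) = 0 := by
    rw [← hX.dotProduct_mulVec_zero_iff]
    simp [mulVec_sub, hp, hq, hpq, hqp]
  simpa [mulVec_sub, sub_eq_zero] using congrFun hker k

theorem mulVec_eq_zero_of_add_mulVec_eq_zero (hX : X.PosSemidef) (hY : Y.PosSemidef)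
    {x : n → 𝕜} (h : (X + Y) *ᵥ x = 0) : X *ᵥ x = 0 := by
  rw [← hX.dotProduct_mulVec_zero_iff]
  have hsum : star x ⬝ᵥ X *ᵥ x + star x ⬝ᵥ Y *ᵥ x = 0 := by
    rw [← dotProduct_add, ← add_mulVec, h, dotProduct_zero]
  exact (add_eq_zero_iff_of_nonneg (hX.dotProduct_mulVec_nonneg x)
    (hY.dotProduct_mulVec_nonneg x)).1 hsum |>.1

end Matrix.PosSemidef

theorem apply_le_one_of_mem_Cor {n m : ℕ} {C : Matrix (Fin n) (Fin m) ℝ} (hC : C ∈ Cor n m)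
    (x : Fin n) (y : Fin m) : C x y ≤ 1 := by
  obtain ⟨u, v, hu, hv, huv⟩ := hC
  rw [huv]
  exact real_inner_le_one_of_norm_eq_one (hu x) (hv y)

theorem posSemidef_of_mem_Cor {n : ℕ} {C : Matrix (Fin n) (Fin n) ℝ} (hC : C ∈ Cor n n)
    (hd : ∀ x, C x x = 1) : C.PosSemidef := by
  obtain ⟨u, v, hu, hv, huv⟩ := hC
  obtain rfl : u = v := funext fun x =>
    (inner_eq_one_iff_of_norm_eq_one (hu x) (hv x)).1 ((huv x x).symm.trans (hd x))
  obtain rfl : C = gram ℝ u := Matrix.ext huv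
  exact posSemidef_gram ℝ u

theorem MY_apply_self (x : Fin 3) : MY x x = 1 := by
  fin_cases x <;> rfl

theorem MY_mulVec_kernel : MY *ᵥ ![1, 1, -√2] = 0 := by
  ext i
  fin_cases i <;> simp [MY, mulVec, dotProduct, Fin.sum_univ_three]
  field_simp
  norm_num

theorem eq_MY_of_mulVec_kernel_eq_zero {A : Matrix (Fin 3) (Fin 3) ℝ} (hA : A.IsHermitian)
    (hd : ∀ i, A i i = 1) (hw : A *ᵥ ![1, 1, -√2] = 0) : A = MY := by
  have hsymm : ∀ i j, A j i = A i j := fun i j => by simpa using hA.apply i j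
  have h2 : √2 * √2 = 2 := Real.mul_self_sqrt zero_le_two
  have row : ∀ i, A i 0 + A i 1 - √2 * A i 2 = 0 := fun i => by
    simpa [mulVec, dotProduct, Fin.sum_univ_three, mul_comm, ← sub_eq_add_neg] using
      congrFun hw i
  have r0 : 1 + A 0 1 - √2 * A 0 2 = 0 := by simpa [hd] using row 0
  have r1 : A 0 1 + 1 - √2 * A 1 2 = 0 := by simpa [hd, hsymm 0 1] using row 1
  have r2 : A 0 2 + A 1 2 - √2 = 0 := by simpa [hd, hsymm 0 2, hsymm 1 2] using row 2
  have h01 : A 0 1 = 0 := by linear_combination (r0 + r1 + √2 * r2 + h2) / 2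
  have h02 : A 0 2 = 1 / √2 := by field_simp; linear_combination -r0 + h01
  have h12 : A 1 2 = 1 / √2 := by field_simp; linear_combination -r1 + h01
  ext i j
  fin_cases i <;> fin_cases j <;> simp [MY, hd, h01, h02, h12, hsymm 0 1, hsymm 0 2, hsymm 1 2]

noncomputable def myVec : Fin 3 → EuclideanSpace ℝ (Fin 6) :=
  ![EuclideanSpace.single 0 1, EuclideanSpace.single 1 1,
    (1 / √2) • (EuclideanSpace.single 0 1 + EuclideanSpace.single 1 1)]

theorem gram_myVec : gram ℝ myVec = MY := by
  ext i j
  fin_cases i <;> fin_cases j <;>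
    simp [myVec, MY, EuclideanSpace.inner_single_left, inner_add_left, inner_add_right,
      real_inner_smul_left, -inner_self_eq_norm_sq_to_K]
  field_simp
  norm_num

theorem norm_myVec (x : Fin 3) : ‖myVec x‖ = 1 := by
  have h : ⟪myVec x, myVec x⟫ = 1 := by
    rw [← gram_apply, gram_myVec]
    fin_cases x <;> rfl
  rw [norm_eq_sqrt_real_inner, h, Real.sqrt_one]

theorem MY_mem_Cor : MY ∈ Cor 3 3 :=
  ⟨myVec, myVec, norm_myVec, norm_myVec, fun x y => by rw [← gram_myVec, gram_apply]⟩

theorem posSemidef_MYhat : MYhat.PosSemidef := by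
  have h : MYhat = gram ℝ (myVec ∘ fun i : Fin 6 => ⟨i % 3, by omega⟩) := by
    ext i j
    simp only [MYhat, ← gram_myVec]
    rfl
  rw [h]
  exact posSemidef_gram ℝ _

theorem isPSDCompletion33_MYhat : IsPSDCompletion33 MYhat MY :=
  ⟨posSemidef_MYhat, fun i => MY_apply_self ⟨i % 3, by omega⟩,
    rfl, rfl, rfl, rfl, rfl, rfl, rfl, rfl, rfl⟩

theorem IsPSDCompletion33.eq_MYhat {X : Matrix (Fin 6) (Fin 6) ℝ}
    (h : IsPSDCompletion33 X MY) : X = MYhat := by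
  obtain ⟨hX, hd, h00, h01, h02, h10, h11, h12, h20, h21, h22⟩ := h
  let fold : Fin 6 → Fin 6 := fun i => Fin.castAdd 3 ⟨i % 3, by omega⟩
  have hcol : ∀ k j, X k j = X k (fold j) := by
    have c0 := hX.apply_eq_apply_of_apply_eq_one (hd 0) (hd 3) h00
    have c1 := hX.apply_eq_apply_of_apply_eq_one (hd 1) (hd 4) h11
    have c2 := hX.apply_eq_apply_of_apply_eq_one (hd 2) (hd 5) h22
    intro k j
    fin_cases j
    exacts [rfl, rfl, rfl, (c0 k).symm, (c1 k).symm, (c2 k).symm]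
  have hsymm : ∀ i j, X j i = X i j := fun i j => by simpa using hX.1.apply i j
  have hfold : ∀ i j, X i j = X (fold i) (fold j) := fun i j => by
    rw [hcol, ← hsymm, hcol, hsymm]
  have hblock : ∀ a b : Fin 3, X (Fin.castAdd 3 a) (Fin.castAdd 3 b) = MY a b := fun a b =>
    calc X (Fin.castAdd 3 a) (Fin.castAdd 3 b) = X (Fin.castAdd 3 a) (Fin.natAdd 3 b) := by
          rw [hcol _ (Fin.natAdd 3 b)]; congr 1; ext; simp [fold]; omega
      _ = MY a b := by fin_cases a <;> fin_cases b <;> assumption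
  ext i j
  rw [hfold]
  exact hblock _ _

theorem eq_MY_of_eq_smul_add_smul {C C' : Matrix (Fin 3) (Fin 3) ℝ} (hC : C ∈ Cor 3 3)
    (hC' : C' ∈ Cor 3 3) {a b : ℝ} (ha : 0 < a) (hb : 0 < b) (hab : a + b = 1)
    (h : MY = a • C + b • C') : C = MY := by
  have hdiag : ∀ x, C x x = 1 ∧ C' x x = 1 := fun x => by
    have hx : a * C x x + b * C' x x = 1 := by
      simpa [MY_apply_self] using (congrFun (congrFun h x) x).symm
    have := apply_le_one_of_mem_Cor hC x x
    have := apply_le_one_of_mem_Cor hC' x x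
    constructor <;> nlinarith
  have hpsd := posSemidef_of_mem_Cor hC fun x => (hdiag x).1
  have hpsd' := posSemidef_of_mem_Cor hC' fun x => (hdiag x).2
  have hker : C *ᵥ ![1, 1, -√2] = 0 := by
    have := (hpsd.smul ha.le).mulVec_eq_zero_of_add_mulVec_eq_zero (hpsd'.smul hb.le)
      (h ▸ MY_mulVec_kernel)
    rwa [smul_mulVec, smul_eq_zero, or_iff_right ha.ne'] at this
  exact eq_MY_of_mulVec_kernel_eq_zero hpsd.1 (fun x => (hdiag x).1) hker

theorem MY_isExtremePt : IsExtremePt (Cor 3 3) MY :=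
  ⟨MY_mem_Cor, fun _ h₁ _ h₂ _ hl0 hl1 h =>
    ⟨eq_MY_of_eq_smul_add_smul h₁ h₂ hl0 (sub_pos.2 hl1) (add_sub_cancel _ _) h,
      eq_MY_of_eq_smul_add_smul h₂ h₁ (sub_pos.2 hl1) hl0 (sub_add_cancel _ _)
        (h.trans (add_comm _ _))⟩⟩

theorem stmt17 :
    IsPSDCompletion33 MYhat MY ∧
    (∀ X, IsPSDCompletion33 X MY → X = MYhat) ∧
    IsExtremePt (Cor 3 3) MY :=
  ⟨isPSDCompletion33_MYhat, fun _ hX => hX.eq_MYhat, MY_isExtremePt⟩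
end

section
/- The correlator C = (1/2)·[[1, 1],[1, −2]] has a unique PSD completion in E₄, namely Ĉ = [[1, −1/2, 1/2, 1/2],[−1/2, 1, 1/2, −1],[1/2, 1/2, 1, −1/2],[1/2, −1, −1/2, 1]]; moreover C is an extreme point of Cor(2,2). -/
open Matrix Real
open scoped RealInnerProductSpace

/-- The correlator of Example 3. -/
noncomputable def Cex : Matrix (Fin 2) (Fin 2) ℝ :=
  (1 / 2 : ℝ) • !![1, 1; 1, -2]

/-- Its unique PSD completion. -/
noncomputable def Cexhat : Matrix (Fin 4) (Fin 4) ℝ :=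
  !![1, -1/2, 1/2, 1/2;
     -1/2, 1, 1/2, -1;
     1/2, 1/2, 1, -1/2;
     1/2, -1, -1/2, 1]


/-
Completion: in a PSD matrix with unit diagonal, an entry `X i j = -1` means that the Gram vectors
of `i` and `j` are opposite, so rows `i` and `j` are negatives of each other. With `X 1 3 = -1`
this determines the two entries `X 0 1` and `X 2 3` not prescribed by `Cex`.

Extremality: entries of a correlation matrix are `≥ -1`, and `C 1 1 = ⟪u₁, v₁⟫ = -1` forces
`v₁ = -u₁`, after which `3 - 2 (C 0 0 + C 0 1 + C 1 0) = ‖u₀ + u₁ - v₀‖²`. So on the face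
`C 1 1 = -1` of `Cor 2 2` the functional `C 0 0 + C 0 1 + C 1 0` is at most `3 / 2`, with
equality only if `v₀ = u₀ + u₁`, which forces `⟪u₀, u₁⟫ = -1 / 2` and hence `C = Cex`. Both
summands of a convex combination equal to `Cex` must lie on that face and attain `3 / 2`.
-/

theorem Cex_eq : Cex = !![1 / 2, 1 / 2; 1 / 2, -1] := by
  ext i j
  fin_cases i <;> fin_cases j <;> norm_num [Cex]

theorem Cexhat_apply_self (i : Fin 4) : Cexhat i i = 1 := by
  fin_cases i <;> rfl

-- Unit vectors in a plane at angles `2π/3, 0, π/3, π`.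
noncomputable def gramVectors : Fin 4 → EuclideanSpace ℝ (Fin 4) :=
  ![!₂[-1 / 2, √3 / 2, 0, 0], !₂[1, 0, 0, 0], !₂[1 / 2, √3 / 2, 0, 0], !₂[-1, 0, 0, 0]]

theorem gram_gramVectors : gram ℝ gramVectors = Cexhat := by
  ext i j
  rw [gram_apply, PiLp.inner_apply, Fin.sum_univ_four]
  fin_cases i <;> fin_cases j <;> simp [gramVectors, Cexhat, div_pow] <;> norm_num

theorem norm_gramVectors (i : Fin 4) : ‖gramVectors i‖ = 1 := by
  rw [← pow_eq_one_iff_of_nonneg (norm_nonneg _) two_ne_zero, ← real_inner_self_eq_norm_sq,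
    ← gram_apply, gram_gramVectors, Cexhat_apply_self]

theorem isPSDCompletion22_Cexhat : IsPSDCompletion22 Cexhat Cex := by
  refine ⟨gram_gramVectors ▸ posSemidef_gram ℝ gramVectors, Cexhat_apply_self, ?_⟩
  simp [Cexhat, Cex_eq]

theorem Cex_mem_Cor : Cex ∈ Cor 2 2 := by
  refine ⟨![gramVectors 0, gramVectors 1], ![gramVectors 2, gramVectors 3], ?_, ?_, ?_⟩
  · simp [Fin.forall_fin_two, norm_gramVectors]
  · simp [Fin.forall_fin_two, norm_gramVectors]
  · simp [Fin.forall_fin_two, ← gram_apply, gram_gramVectors, Cex_eq, Cexhat]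

theorem Matrix.PosSemidef.apply_eq_neg_of_apply_eq_neg_one {n : Type*} [Fintype n]
    [DecidableEq n] {X : Matrix n n ℝ} (hX : X.PosSemidef) {i j : n} (hi : X i i = 1)
    (hj : X j j = 1) (hij : X i j = -1) (k : n) : X k j = -X k i := by
  have hji : X j i = -1 := by simpa using (hX.1.apply j i).symm.trans hij
  set x : n → ℝ := Pi.single i 1 + Pi.single j 1
  have hx : star x ⬝ᵥ X *ᵥ x = 0 := by simp [x, mulVec_add, hi, hj, hij, hji]
  have hXx := congrFun ((hX.dotProduct_mulVec_zero_iff x).1 hx) k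
  simp only [x, mulVec_add, mulVec_single, MulOpposite.op_one, one_smul, Pi.add_apply,
    col_apply, Pi.zero_apply] at hXx
  linarith

theorem eq_Cexhat_of_isPSDCompletion22 {X : Matrix (Fin 4) (Fin 4) ℝ}
    (hX : IsPSDCompletion22 X Cex) : X = Cexhat := by
  obtain ⟨hpsd, hdiag, h02, h03, h12, h13⟩ := hX
  simp only [Cex_eq, of_apply, cons_val', cons_val_zero, cons_val_one, empty_val',
    cons_val_fin_one] at h02 h03 h12 h13
  have hsymm (i j : Fin 4) : X j i = X i j := by simpa using hpsd.1.apply i j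
  have h01 : X 0 1 = -1 / 2 := by
    linarith [hpsd.apply_eq_neg_of_apply_eq_neg_one (hdiag 1) (hdiag 3) h13 0]
  have h23 : X 2 3 = -1 / 2 := by
    linarith [hpsd.apply_eq_neg_of_apply_eq_neg_one (hdiag 1) (hdiag 3) h13 2, hsymm 1 2]
  ext i j
  fin_cases i <;> fin_cases j <;>
    simp [Cexhat, hdiag, h01, h02, h03, h12, h13, h23, hsymm 0 1, hsymm 0 2, hsymm 0 3,
      hsymm 1 2, hsymm 1 3, hsymm 2 3]

section UnitVectors

variable {E : Type*} [NormedAddCommGroup E] [InnerProductSpace ℝ E] {u₀ u₁ v₀ : E}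

theorem two_mul_inner_sub_inner_add_inner (hu₀ : ‖u₀‖ = 1) (hu₁ : ‖u₁‖ = 1) (hv₀ : ‖v₀‖ = 1) :
    2 * (⟪u₀, v₀⟫ - ⟪u₀, u₁⟫ + ⟪u₁, v₀⟫) = 3 - ‖u₀ + u₁ - v₀‖ ^ 2 := by
  rw [norm_sub_sq_real, norm_add_sq_real, hu₀, hu₁, hv₀, inner_add_left]
  ring

theorem inner_sub_inner_add_inner_le (hu₀ : ‖u₀‖ = 1) (hu₁ : ‖u₁‖ = 1) (hv₀ : ‖v₀‖ = 1) :
    ⟪u₀, v₀⟫ - ⟪u₀, u₁⟫ + ⟪u₁, v₀⟫ ≤ 3 / 2 := by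
  nlinarith [two_mul_inner_sub_inner_add_inner hu₀ hu₁ hv₀, sq_nonneg ‖u₀ + u₁ - v₀‖]

theorem eq_add_of_inner_sub_inner_add_inner_eq (hu₀ : ‖u₀‖ = 1) (hu₁ : ‖u₁‖ = 1)
    (hv₀ : ‖v₀‖ = 1) (h : ⟪u₀, v₀⟫ - ⟪u₀, u₁⟫ + ⟪u₁, v₀⟫ = 3 / 2) :
    v₀ = u₀ + u₁ ∧ ⟪u₀, u₁⟫ = -1 / 2 := by
  have hnorm : ‖u₀ + u₁ - v₀‖ ^ 2 = 0 := by
    linarith [two_mul_inner_sub_inner_add_inner hu₀ hu₁ hv₀]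
  have hv : v₀ = u₀ + u₁ := (sub_eq_zero.1 (by simpa using hnorm)).symm
  refine ⟨hv, ?_⟩
  have hsq := norm_add_sq_real u₀ u₁
  rw [← hv, hv₀, hu₀, hu₁] at hsq
  linarith

end UnitVectors

theorem neg_one_le_of_mem_Cor {n m : ℕ} {C : Matrix (Fin n) (Fin m) ℝ} (hC : C ∈ Cor n m)
    (x : Fin n) (y : Fin m) : -1 ≤ C x y := by
  obtain ⟨u, v, hu, hv, hC⟩ := hC
  have h := abs_real_inner_le_norm (u x) (v y)
  rw [hu, hv, one_mul] at h
  exact hC x y ▸ (abs_le.1 h).1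

theorem exists_eq_of_mem_Cor_of_apply_one_one_eq_neg_one {C : Matrix (Fin 2) (Fin 2) ℝ}
    (hC : C ∈ Cor 2 2) (h11 : C 1 1 = -1) :
    ∃ u₀ u₁ v₀ : EuclideanSpace ℝ (Fin 4), ‖u₀‖ = 1 ∧ ‖u₁‖ = 1 ∧ ‖v₀‖ = 1 ∧
      C = !![⟪u₀, v₀⟫, -⟪u₀, u₁⟫; ⟪u₁, v₀⟫, -1] := by
  obtain ⟨u, v, hu, hv, hC⟩ := hC
  have hv₁ : v 1 = -u 1 :=
    (inner_eq_neg_one_iff_of_norm_eq_one (hv 1) (hu 1)).1 (by rw [real_inner_comm, ← hC, h11])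
  refine ⟨u 0, u 1, v 0, hu 0, hu 1, hv 0, ?_⟩
  ext i j
  fin_cases i <;> fin_cases j <;> simp [hC, hv₁, hu]

theorem sum_le_of_mem_Cor {C : Matrix (Fin 2) (Fin 2) ℝ} (hC : C ∈ Cor 2 2) (h11 : C 1 1 = -1) :
    C 0 0 + C 0 1 + C 1 0 ≤ 3 / 2 := by
  obtain ⟨u₀, u₁, v₀, hu₀, hu₁, hv₀, rfl⟩ :=
    exists_eq_of_mem_Cor_of_apply_one_one_eq_neg_one hC h11
  simpa [← sub_eq_add_neg] using inner_sub_inner_add_inner_le hu₀ hu₁ hv₀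

theorem eq_Cex_of_mem_Cor {C : Matrix (Fin 2) (Fin 2) ℝ} (hC : C ∈ Cor 2 2) (h11 : C 1 1 = -1)
    (hsum : C 0 0 + C 0 1 + C 1 0 = 3 / 2) : C = Cex := by
  obtain ⟨u₀, u₁, v₀, hu₀, hu₁, hv₀, rfl⟩ :=
    exists_eq_of_mem_Cor_of_apply_one_one_eq_neg_one hC h11
  obtain ⟨rfl, hp⟩ := eq_add_of_inner_sub_inner_add_inner_eq hu₀ hu₁ hv₀
    (by simpa [← sub_eq_add_neg] using hsum)
  rw [Cex_eq]
  ext i j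
  fin_cases i <;> fin_cases j <;>
    simp [inner_add_right, real_inner_comm u₀ u₁, hu₀, hu₁, hp] <;> norm_num

theorem isExtremePt_Cor_Cex : IsExtremePt (Cor 2 2) Cex := by
  refine ⟨Cex_mem_Cor, fun C₁ hC₁ C₂ hC₂ l hl₀ hl₁ h => ?_⟩
  have hcomb (x y : Fin 2) : l * C₁ x y + (1 - l) * C₂ x y = Cex x y := by simp [h]
  have h₁₁ : C₁ 1 1 = -1 ∧ C₂ 1 1 = -1 := by
    have e : l * C₁ 1 1 + (1 - l) * C₂ 1 1 = -1 := by simpa [Cex_eq] using hcomb 1 1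
    constructor <;> nlinarith [neg_one_le_of_mem_Cor hC₁ 1 1, neg_one_le_of_mem_Cor hC₂ 1 1]
  have hsum : C₁ 0 0 + C₁ 0 1 + C₁ 1 0 = 3 / 2 ∧ C₂ 0 0 + C₂ 0 1 + C₂ 1 0 = 3 / 2 := by
    have hCex : Cex 0 0 + Cex 0 1 + Cex 1 0 = 3 / 2 := by norm_num [Cex]
    have e : l * (C₁ 0 0 + C₁ 0 1 + C₁ 1 0) + (1 - l) * (C₂ 0 0 + C₂ 0 1 + C₂ 1 0) = 3 / 2 := by
      linear_combination hcomb 0 0 + hcomb 0 1 + hcomb 1 0 + hCex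
    constructor <;> nlinarith [sum_le_of_mem_Cor hC₁ h₁₁.1, sum_le_of_mem_Cor hC₂ h₁₁.2]
  exact ⟨eq_Cex_of_mem_Cor hC₁ h₁₁.1 hsum.1, eq_Cex_of_mem_Cor hC₂ h₁₁.2 hsum.2⟩

theorem stmt18 :
    IsPSDCompletion22 Cexhat Cex ∧
    (∀ X, IsPSDCompletion22 X Cex → X = Cexhat) ∧
    IsExtremePt (Cor 2 2) Cex :=
  ⟨isPSDCompletion22_Cexhat, fun _ => eq_Cexhat_of_isPSDCompletion22, isExtremePt_Cor_Cex⟩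
end

section
/- For every C = (c_{xy}) ∈ Cor(2,2) one has c₁₁ + c₁₂ + c₂₁ − c₂₂ ≤ 2√2 (the Tsirelson bound), and equality holds if and only if C is the CHSH correlator (1/√2)·[[1, 1],[1, −1]]; i.e., the hyperplane c₁₁ + c₁₂ + c₂₁ − c₂₂ = 2√2 exposes the CHSH correlator in Cor(2,2). -/
open Matrix Real
open scoped RealInnerProductSpace

theorem stmt19 :
    ∀ C ∈ Cor 2 2,
      C 0 0 + C 0 1 + C 1 0 - C 1 1 ≤ 2 * Real.sqrt 2 ∧
      (C 0 0 + C 0 1 + C 1 0 - C 1 1 = 2 * Real.sqrt 2 ↔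
        C = (1 / Real.sqrt 2) • !![1, 1; 1, -1]) := by
  rintro C ⟨u, v, hu, hv, hC⟩
  have s2 : Real.sqrt 2 ^ 2 = 2 := Real.sq_sqrt (by norm_num)
  have s2pos : (0:ℝ) < Real.sqrt 2 := Real.sqrt_pos.2 (by norm_num)
  set w : EuclideanSpace ℝ (Fin (2 + 2)) := v 0 + v 1 with hw
  set z : EuclideanSpace ℝ (Fin (2 + 2)) := v 0 - v 1 with hz
  set t : ℝ := ⟪v 0, v 1⟫ with ht
  have hpw : ‖w‖ ^ 2 = 2 + 2 * t := by
    rw [hw, norm_add_sq_real, hv 0, hv 1, ht]; ring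
  have hqz : ‖z‖ ^ 2 = 2 - 2 * t := by
    rw [hz, norm_sub_sq_real, hv 0, hv 1, ht]; ring
  have ha : ⟪u 0, w⟫ ≤ ‖w‖ := by
    calc ⟪u 0, w⟫ ≤ ‖u 0‖ * ‖w‖ := real_inner_le_norm _ _
    _ = ‖w‖ := by rw [hu 0, one_mul]
  have hb : ⟪u 1, z⟫ ≤ ‖z‖ := by
    calc ⟪u 1, z⟫ ≤ ‖u 1‖ * ‖z‖ := real_inner_le_norm _ _
    _ = ‖z‖ := by rw [hu 1, one_mul]
  have hpq : ‖w‖ + ‖z‖ ≤ 2 * Real.sqrt 2 := by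
    nlinarith [norm_nonneg w, norm_nonneg z, sq_nonneg (‖w‖ - ‖z‖), s2pos, s2]
  have hS : C 0 0 + C 0 1 + C 1 0 - C 1 1 = ⟪u 0, w⟫ + ⟪u 1, z⟫ := by
    rw [hC 0 0, hC 0 1, hC 1 0, hC 1 1, hw, hz, inner_add_right, inner_sub_right]; ring
  refine ⟨by rw [hS]; linarith, ?_, ?_⟩
  · intro heq
    rw [hS] at heq
    have hp : ‖w‖ = Real.sqrt 2 := by
      nlinarith [sq_nonneg (‖w‖ - ‖z‖), norm_nonneg w, norm_nonneg z]
    have hq : ‖z‖ = Real.sqrt 2 := by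
      nlinarith [sq_nonneg (‖w‖ - ‖z‖), norm_nonneg w, norm_nonneg z]
    have ht0 : t = 0 := by nlinarith
    have ha' : ⟪u 0, w⟫ = Real.sqrt 2 := by linarith
    have hb' : ⟪u 1, z⟫ = Real.sqrt 2 := by linarith
    have hinv : (Real.sqrt 2)⁻¹ * Real.sqrt 2 = 1 := inv_mul_cancel₀ s2pos.ne'
    have hu0 : u 0 = (Real.sqrt 2)⁻¹ • w := by
      have h0 : ‖u 0 - (Real.sqrt 2)⁻¹ • w‖ ^ 2 = 0 := by
        rw [norm_sub_sq_real, hu 0, real_inner_smul_right, ha', norm_smul, hp,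
          Real.norm_eq_abs, abs_of_pos (inv_pos.2 s2pos), hinv]
        ring
      have := (pow_eq_zero_iff (two_ne_zero)).1 h0
      rw [norm_eq_zero, sub_eq_zero] at this
      exact this
    have hu1 : u 1 = (Real.sqrt 2)⁻¹ • z := by
      have h0 : ‖u 1 - (Real.sqrt 2)⁻¹ • z‖ ^ 2 = 0 := by
        rw [norm_sub_sq_real, hu 1, real_inner_smul_right, hb', norm_smul, hq,
          Real.norm_eq_abs, abs_of_pos (inv_pos.2 s2pos), hinv]
        ring
      have := (pow_eq_zero_iff (two_ne_zero)).1 h0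
      rw [norm_eq_zero, sub_eq_zero] at this
      exact this
    have hv00 : ⟪v 0, v 0⟫ = (1:ℝ) := by
      rw [real_inner_self_eq_norm_sq, hv 0]; norm_num
    have hv11 : ⟪v 1, v 1⟫ = (1:ℝ) := by
      rw [real_inner_self_eq_norm_sq, hv 1]; norm_num
    have hv10 : ⟪v 1, v 0⟫ = (0:ℝ) := by rw [real_inner_comm, ← ht, ht0]
    have hv01 : ⟪v 0, v 1⟫ = (0:ℝ) := by rw [← ht, ht0]
    have e00 : C 0 0 = (Real.sqrt 2)⁻¹ := by
      rw [hC 0 0, hu0, real_inner_smul_left, hw, inner_add_left, hv00, hv10]; ring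
    have e01 : C 0 1 = (Real.sqrt 2)⁻¹ := by
      rw [hC 0 1, hu0, real_inner_smul_left, hw, inner_add_left, hv11, hv01]; ring
    have e10 : C 1 0 = (Real.sqrt 2)⁻¹ := by
      rw [hC 1 0, hu1, real_inner_smul_left, hz, inner_sub_left, hv00, hv10]; ring
    have e11 : C 1 1 = -(Real.sqrt 2)⁻¹ := by
      rw [hC 1 1, hu1, real_inner_smul_left, hz, inner_sub_left, hv11, hv01]; ring
    ext i j
    fin_cases i <;> fin_cases j <;>
      simp [e00, e01, e10, e11, Matrix.smul_apply, one_div]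
  · intro h
    rw [h]
    simp [Matrix.smul_apply]
    field_simp
    linear_combination -2 * s2
end
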